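/- arXiv:1501.04059 — 8 statements merged into one kernel-verified Lean document; each statement's English description precedes it below -/
import Mathlib

section
/- A matrix weight W of size N reduces to scalar weights (i.e., there exist a nonsingular matrix M and a diagonal matrix weight Λ with W(x) = M Λ(x) M* for all x) if and only if there exists a positive definite matrix P such that W(x) P W(y) = W(y) P W(x) for all x, y in the support of W. -/
open MeasureTheory Matrix
open scoped ComplexOrder

noncomputable section

/-- The set of real points strictly between the extended-real endpoints `a` and `b`. -/
def weightSupport (a b : EReal) : Set ℝ := {x : ℝ | a < (x : EReal) ∧ (x : EReal) < b}

variable {I : Type} [Fintype I] [DecidableEq I]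
variable {I' : Type} [Fintype I'] [DecidableEq I']

/-- Entrywise integral of a matrix-valued function over a set. -/
def matIntegral (S : Set ℝ) (F : ℝ → Matrix I I ℂ) : Matrix I I ℂ :=
  Matrix.of fun i j => ∫ x in S, F x i j

/-- `W` is a matrix weight on the (nondegenerate) interval `(a,b)`. -/
def IsMatrixWeight (a b : EReal) (W : ℝ → Matrix I I ℂ) : Prop :=
  a < b ∧
  (∀ x ∈ weightSupport a b, (W x).PosSemidef) ∧
  (∀ᵐ x : ℝ ∂(volume.restrict (weightSupport a b)), (W x).PosDef) ∧
  (∀ n : ℕ, ∀ i j, IntegrableOn (fun x : ℝ => (x : ℂ) ^ n * W x i j) (weightSupport a b))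

/-- Equivalence of matrix weights: `W' = M W M*` for a nonsingular `M`. -/
def WeightEquiv (a b : EReal) (W : ℝ → Matrix I I ℂ) (W' : ℝ → Matrix I' I' ℂ) : Prop :=
  ∃ (M : Matrix I' I ℂ) (M' : Matrix I I' ℂ), M * M' = 1 ∧ M' * M = 1 ∧
    ∀ x ∈ weightSupport a b, W' x = M * W x * Mᴴ

/-- Unitary equivalence of matrix weights. -/
def UnitaryWeightEquiv (a b : EReal) (W : ℝ → Matrix I I ℂ) (W' : ℝ → Matrix I' I' ℂ) : Prop :=
  ∃ M : Matrix I' I ℂ, M * Mᴴ = 1 ∧ Mᴴ * M = 1 ∧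
    ∀ x ∈ weightSupport a b, W' x = M * W x * Mᴴ

/-- `W` reduces: it is equivalent to a direct sum of two matrix weights of smaller size. -/
def Reduces (a b : EReal) (W : ℝ → Matrix I I ℂ) : Prop :=
  ∃ (N₁ N₂ : ℕ) (W₁ : ℝ → Matrix (Fin N₁) (Fin N₁) ℂ) (W₂ : ℝ → Matrix (Fin N₂) (Fin N₂) ℂ),
    0 < N₁ ∧ 0 < N₂ ∧ N₁ + N₂ = Fintype.card I ∧
    IsMatrixWeight a b W₁ ∧ IsMatrixWeight a b W₂ ∧
    WeightEquiv a b W (fun x => Matrix.fromBlocks (W₁ x) 0 0 (W₂ x))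

/-- The real vector space `C_ℝ` of a matrix weight. -/
def CR (a b : EReal) (W : ℝ → Matrix I I ℂ) : Set (Matrix I I ℂ) :=
  {T | ∀ᵐ x ∂(volume.restrict (weightSupport a b)), T * W x = W x * Tᴴ}

/-- Evaluation of a matrix polynomial at a real point. -/
def polyEval (p : Polynomial (Matrix I I ℂ)) (x : ℝ) : Matrix I I ℂ :=
  p.eval ((x : ℂ) • (1 : Matrix I I ℂ))

/-- A sequence of orthogonal polynomials with respect to `W`:  `Q n` has degree `n` with
nonsingular leading coefficient, and distinct members are orthogonal. -/
def IsOPS (a b : EReal) (W : ℝ → Matrix I I ℂ) (Q : ℕ → Polynomial (Matrix I I ℂ)) : Prop :=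
  (∀ n, (Q n).natDegree = n ∧ IsUnit ((Q n).coeff n)) ∧
  ∀ n m, n ≠ m →
    matIntegral (weightSupport a b) (fun x => polyEval (Q n) x * W x * (polyEval (Q m) x)ᴴ) = 0

/-- The sequence of monic orthogonal polynomials with respect to `W`. -/
def IsMonicOPS (a b : EReal) (W : ℝ → Matrix I I ℂ) (P : ℕ → Polynomial (Matrix I I ℂ)) : Prop :=
  (∀ n, (P n).Monic ∧ (P n).natDegree = n) ∧
  ∀ n m, n ≠ m →
    matIntegral (weightSupport a b) (fun x => polyEval (P n) x * W x * (polyEval (P m) x)ᴴ) = 0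

end


section AuxStmt0

open Module.End

set_option maxHeartbeats 1000000 in
private lemma aux_posDef_conj {n : Type*} [Fintype n] [DecidableEq n]
    {A B : Matrix n n ℂ} (hA : A.PosDef) (hB : IsUnit B) :
    (B * A * Bᴴ).PosDef := by
  have := hA.conjTranspose_mul_mul_same (B := Bᴴ)
    (Matrix.mulVec_injective_iff_isUnit.2 ((Matrix.isUnit_conjTranspose B).2 hB))
  rwa [Matrix.conjTranspose_conjTranspose] at this

private lemma aux_isDiag_comm {n : Type*} [Fintype n] {A B : Matrix n n ℂ}
    (hA : A.IsDiag) (hB : B.IsDiag) : A * B = B * A := by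
  ext i j
  rw [Matrix.mul_apply, Matrix.mul_apply]
  rcases eq_or_ne i j with rfl | hij
  · rw [Finset.sum_eq_single i (fun k _ hk => by rw [hA (Ne.symm hk), zero_mul]) (by simp),
      Finset.sum_eq_single i (fun k _ hk => by rw [hB (Ne.symm hk), zero_mul]) (by simp),
      mul_comm]
  · rw [Finset.sum_eq_zero, Finset.sum_eq_zero]
    · intro k _
      rcases eq_or_ne i k with rfl | h
      · rw [hA hij, mul_zero]
      · rw [hB h, zero_mul]
    · intro k _
      rcases eq_or_ne i k with rfl | h
      · rw [hB hij, mul_zero]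
      · rw [hA h, zero_mul]

private lemma aux_toEuclideanLin_mul {n : Type*} [Fintype n] [DecidableEq n]
    (A B : Matrix n n ℂ) :
    Matrix.toEuclideanLin (A * B) = Matrix.toEuclideanLin A * Matrix.toEuclideanLin B := by
  apply LinearMap.ext
  intro v
  simp [Matrix.toEuclideanLin_apply, Module.End.mul_apply, Matrix.mulVec_mulVec]

set_option maxHeartbeats 800000 in
/-- Simultaneous unitary diagonalization of a commuting family of Hermitian matrices. -/
private lemma aux_simdiag {N : ℕ} {ι : Type} (V : ι → Matrix (Fin N) (Fin N) ℂ)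
    (hH : ∀ x, (V x).IsHermitian) (hC : ∀ x y, V x * V y = V y * V x) :
    ∃ (U : Matrix (Fin N) (Fin N) ℂ) (χ : Fin N → ι → ℂ),
      Uᴴ * U = 1 ∧ U * Uᴴ = 1 ∧ ∀ x, Uᴴ * V x * U = Matrix.diagonal (fun i => χ i x) := by
  classical
  let T : ι → Module.End ℂ (EuclideanSpace ℂ (Fin N)) := fun x => Matrix.toEuclideanLin (V x)
  have hTsym : ∀ x, (T x).IsSymmetric := fun x => Matrix.isHermitian_iff_isSymmetric.1 (hH x)
  have hTcomm : ∀ x y, T x * T y = T y * T x := fun x y => by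
    show Matrix.toEuclideanLin (V x) * Matrix.toEuclideanLin (V y) = _
    rw [← aux_toEuclideanLin_mul, ← aux_toEuclideanLin_mul, hC]
  have hTop : (⨆ γ : ι → ℂ, ⨅ j, eigenspace (T j) (γ j)) = ⊤ :=
    LinearMap.IsSymmetric.iSup_iInf_eq_top_of_commute hTsym (fun x y _ => hTcomm x y)
  have hOF := LinearMap.IsSymmetric.orthogonalFamily_iInf_eigenspaces hTsym
  let JE : (ι → ℂ) → Submodule ℂ (EuclideanSpace ℂ (Fin N)) :=
    fun γ => ⨅ j, eigenspace (T j) (γ j)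
  haveI : Fintype {γ : ι → ℂ // JE γ ≠ ⊥} := hOF.independent.fintypeNeBotOfFiniteDimensional
  have hOF' := hOF.comp
    (Subtype.coe_injective : Function.Injective (Subtype.val : {γ : ι → ℂ // JE γ ≠ ⊥} → _))
  have hsup' : (⨆ γ : {γ : ι → ℂ // JE γ ≠ ⊥}, JE γ.1) = ⊤ := by
    rw [← hTop]
    apply le_antisymm
    · exact iSup_le fun γ => le_iSup JE γ.1
    · refine iSup_le fun γ => ?_
      by_cases h : JE γ = ⊥
      · exact h.le.trans bot_le
      · exact le_iSup (fun γ' : {γ : ι → ℂ // JE γ ≠ ⊥} => JE γ'.1) ⟨γ, h⟩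
  have hInternal : DirectSum.IsInternal (fun γ : {γ : ι → ℂ // JE γ ≠ ⊥} => JE γ.1) :=
    hOF'.isInternal_iff.mpr (by rw [hsup', Submodule.top_orthogonal_eq_bot])
  have hn : Module.finrank ℂ (EuclideanSpace ℂ (Fin N)) = N := by simp
  let bas : OrthonormalBasis (Fin N) ℂ (EuclideanSpace ℂ (Fin N)) :=
    hInternal.subordinateOrthonormalBasis hn hOF'
  let χ : Fin N → ι → ℂ := fun i => (hInternal.subordinateOrthonormalBasisIndex hn i hOF').1
  have hmem : ∀ i, bas i ∈ JE (χ i) :=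
    fun i => hInternal.subordinateOrthonormalBasis_subordinate hn i hOF'
  have heig : ∀ (i : Fin N) (x : ι), Matrix.toEuclideanLin (V x) (bas i) = χ i x • bas i :=
    fun i x => Module.End.mem_eigenspace_iff.mp ((Submodule.mem_iInf _).mp (hmem i) x)
  have hUU : (Matrix.of fun k i => bas i k)ᴴ * (Matrix.of fun k i => bas i k) = 1 := by
    ext i j
    have horth := orthonormal_iff_ite.mp bas.orthonormal i j
    rw [PiLp.inner_apply] at horth
    simp only [RCLike.inner_apply] at horth
    simp only [Matrix.mul_apply, Matrix.conjTranspose_apply, Matrix.of_apply, Matrix.one_apply]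
    simp only [RCLike.star_def]
    rw [← horth]
    exact Finset.sum_congr rfl fun _ _ => mul_comm _ _
  refine ⟨Matrix.of fun k i => bas i k, χ, hUU, mul_eq_one_comm.mp hUU, ?_⟩
  intro x
  ext i j
  have horth := orthonormal_iff_ite.mp bas.orthonormal i j
  rw [PiLp.inner_apply] at horth
  simp only [RCLike.inner_apply] at horth
  have hc : ∀ k, (∑ l, V x k l * bas j l) = χ j x * bas j k := fun k => by
    simpa [Matrix.mulVec, dotProduct] using
      congrFun (congrArg (WithLp.equiv 2 (Fin N → ℂ)) (heig j x)) k
  rw [Matrix.mul_assoc, Matrix.mul_apply]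
  simp only [Matrix.conjTranspose_apply, Matrix.of_apply, Matrix.mul_apply, hc]
  have hswap : ∀ k, star (bas i k) * (χ j x * bas j k)
      = χ j x * (star (bas i k) * bas j k) := fun k => mul_left_comm _ _ _
  simp only [hswap]
  rw [← Finset.mul_sum, Matrix.diagonal_apply]
  simp only [RCLike.star_def]
  rw [show (∑ k, (starRingEnd ℂ) (bas i k) * bas j k) = if i = j then 1 else 0 by
    rw [← horth]; exact Finset.sum_congr rfl fun _ _ => mul_comm _ _]
  split_ifs with h
  · subst h; simp
  · simp

private lemma aux_int {N : ℕ} (s : Set ℝ) (W : ℝ → Matrix (Fin N) (Fin N) ℂ)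
    (hInt : ∀ n : ℕ, ∀ i j, IntegrableOn (fun x : ℝ => (x : ℂ) ^ n * W x i j) s)
    (A B : Matrix (Fin N) (Fin N) ℂ) :
    ∀ n : ℕ, ∀ i j, IntegrableOn (fun x : ℝ => (x : ℂ) ^ n * (A * W x * B) i j) s := by
  intro n i j
  have hrw : (fun x : ℝ => (x : ℂ) ^ n * (A * W x * B) i j)
      = fun x : ℝ => ∑ l, ∑ k, (A i k * B l j) * ((x : ℂ) ^ n * W x k l) := by
    funext x
    rw [Matrix.mul_apply, Finset.mul_sum]
    refine Finset.sum_congr rfl fun l _ => ?_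
    rw [Matrix.mul_apply, Finset.sum_mul, Finset.mul_sum]
    refine Finset.sum_congr rfl fun k _ => ?_
    ring
  rw [hrw]
  refine integrable_finset_sum _ fun l _ => integrable_finset_sum _ fun k _ => ?_
  exact (hInt n k l).const_mul _

end AuxStmt0

/-- A matrix weight `W` reduces to scalar weights (i.e. is equivalent to a
diagonal matrix weight) if and only if there is a positive definite matrix `P` with
`W(x) P W(y) = W(y) P W(x)` for all `x, y` in the support of `W`. -/
theorem stmt_0 {N : ℕ} (a b : EReal) (W : ℝ → Matrix (Fin N) (Fin N) ℂ)
    (hW : IsMatrixWeight a b W) :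
    (∃ (M : Matrix (Fin N) (Fin N) ℂ) (Λ : ℝ → Matrix (Fin N) (Fin N) ℂ),
        IsUnit M ∧ IsMatrixWeight a b Λ ∧ (∀ x ∈ weightSupport a b, (Λ x).IsDiag) ∧
        ∀ x ∈ weightSupport a b, W x = M * Λ x * Mᴴ) ↔
      ∃ P : Matrix (Fin N) (Fin N) ℂ, P.PosDef ∧
        ∀ x ∈ weightSupport a b, ∀ y ∈ weightSupport a b,
          W x * P * W y = W y * P * W x := by
  obtain ⟨hab, hPSD, hPD, hInt⟩ := hW
  constructor
  · rintro ⟨M, Λ, hM, hΛ, hdiag, heq⟩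
    have hMdet : IsUnit M.det := (Matrix.isUnit_iff_isUnit_det M).mp hM
    have hMHdet : IsUnit Mᴴ.det :=
      (Matrix.isUnit_iff_isUnit_det Mᴴ).mp ((Matrix.isUnit_conjTranspose M).2 hM)
    refine ⟨(M * Mᴴ)⁻¹, ?_, ?_⟩
    · have h1 : (M * 1 * Mᴴ).PosDef := aux_posDef_conj Matrix.PosDef.one hM
      rw [mul_one] at h1
      exact h1.inv
    · have key : Mᴴ * (M * Mᴴ)⁻¹ * M = 1 := by
        rw [Matrix.mul_inv_rev, ← Matrix.mul_assoc, Matrix.mul_nonsing_inv Mᴴ hMHdet,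
          one_mul, Matrix.nonsing_inv_mul M hMdet]
      have hcancel : ∀ Z : Matrix (Fin N) (Fin N) ℂ,
          Mᴴ * ((M * Mᴴ)⁻¹ * (M * Z)) = Z := fun Z => by
        rw [← Matrix.mul_assoc, ← Matrix.mul_assoc, key, one_mul]
      intro x hx y hy
      rw [heq x hx, heq y hy]
      simp only [Matrix.mul_assoc]
      rw [hcancel (Λ y * Mᴴ), hcancel (Λ x * Mᴴ),
        ← Matrix.mul_assoc (Λ x), ← Matrix.mul_assoc (Λ y),
        aux_isDiag_comm (hdiag x hx) (hdiag y hy)]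
  · rintro ⟨P, hP, hsymm⟩
    open scoped MatrixOrder in set S := CFC.sqrt P with hSdef
    open scoped MatrixOrder in
    have hSH : S.IsHermitian := (Matrix.nonneg_iff_posSemidef.mp (CFC.sqrt_nonneg P)).1
    open scoped MatrixOrder in
    have hSS : S * S = P := CFC.sqrt_mul_sqrt_self P (Matrix.nonneg_iff_posSemidef.mpr hP.posSemidef)
    have hSdet : IsUnit S.det := by
      rw [isUnit_iff_ne_zero]
      intro h
      have : P.det = 0 := by rw [← hSS, Matrix.det_mul, h, zero_mul]
      exact (ne_of_gt hP.det_pos) this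
    have hSu : IsUnit S := (Matrix.isUnit_iff_isUnit_det S).mpr hSdet
    let V : weightSupport a b → Matrix (Fin N) (Fin N) ℂ := fun x => S * W x * S
    have hVH : ∀ x, (V x).IsHermitian := fun x => by
      have h := Matrix.isHermitian_mul_mul_conjTranspose S (hPSD x x.2).1
      rwa [hSH.eq] at h
    have hVC : ∀ x y, V x * V y = V y * V x := fun x y => by
      have h1 : V x * V y = S * (W x * P * W y) * S := by
        rw [← hSS]; show S * W x * S * (S * W y * S) = _; noncomm_ring
      have h2 : V y * V x = S * (W y * P * W x) * S := by
        rw [← hSS]; show S * W y * S * (S * W x * S) = _; noncomm_ring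
      rw [h1, h2, hsymm x x.2 y y.2]
    obtain ⟨U, χ, hU1, hU2, hdiagU⟩ := aux_simdiag V hVH hVC
    have hUu : IsUnit U := IsUnit.of_mul_eq_one _ hU2
    have hUHu : IsUnit Uᴴ := IsUnit.of_mul_eq_one _ hU1
    have hAH : (Uᴴ * S)ᴴ = S * U := by
      rw [Matrix.conjTranspose_mul, hSH.eq, Matrix.conjTranspose_conjTranspose]
    refine ⟨S⁻¹ * U, fun x => (Uᴴ * S) * W x * (Uᴴ * S)ᴴ,
      (Matrix.isUnit_nonsing_inv_iff.mpr hSu).mul hUu,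
      ⟨hab, ?_, ?_, ?_⟩, ?_, ?_⟩
    · exact fun x hx => (hPSD x hx).mul_mul_conjTranspose_same _
    · filter_upwards [hPD] with x hx
      exact aux_posDef_conj hx (hUHu.mul hSu)
    · exact aux_int _ W hInt _ _
    · intro x hx
      have hV : (Uᴴ * S) * W x * (Uᴴ * S)ᴴ = Uᴴ * V ⟨x, hx⟩ * U := by
        rw [hAH]; show _ = Uᴴ * (S * W x * S) * U; noncomm_ring
      show ((Uᴴ * S) * W x * (Uᴴ * S)ᴴ).IsDiag
      rw [hV, hdiagU ⟨x, hx⟩]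
      exact Matrix.isDiag_diagonal _
    · intro x hx
      show W x = (S⁻¹ * U) * ((Uᴴ * S) * W x * (Uᴴ * S)ᴴ) * (S⁻¹ * U)ᴴ
      have hMA : (S⁻¹ * U) * (Uᴴ * S) = 1 := by
        rw [Matrix.mul_assoc, ← Matrix.mul_assoc U, hU2, one_mul,
          Matrix.nonsing_inv_mul S hSdet]
      have : (S⁻¹ * U) * ((Uᴴ * S) * W x * (Uᴴ * S)ᴴ) * (S⁻¹ * U)ᴴ
          = ((S⁻¹ * U) * (Uᴴ * S)) * W x * ((S⁻¹ * U) * (Uᴴ * S))ᴴ := by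
        rw [Matrix.conjTranspose_mul ((S⁻¹ * U)) ((Uᴴ * S))]
        noncomm_ring
      rw [this, hMA, one_mul, Matrix.conjTranspose_one, mul_one]
end

section
/- For a matrix weight W of size N the following three conditions are equivalent: (i) W is unitarily equivalent to a diagonal matrix weight; (ii) W(x) W(y) = W(y) W(x) for all x, y; (iii) there exists a positive definite matrix P such that W(x) P W(y) = W(y) P W(x) and W(x) P = P W(x) for all x, y. -/
open MeasureTheory Matrix
open scoped ComplexOrder

/-!
A commuting family of Hermitian matrices has a common orthonormal eigenbasis, because the joint
eigenspaces of commuting symmetric operators decompose the space orthogonally; the unitary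
change to that basis diagonalizes every `W x` at once, and conjugating a matrix weight by a
unitary gives again a matrix weight. Conversely, diagonal matrices commute and conjugation
preserves commutation. For (iii) ⇒ (ii), an invertible `P` commuting with all `W x` gives
`P (W x W y) = W x P W y = W y P W x = P (W y W x)`; for the converse take `P = 1`.
-/

theorem Commute.conj_of_mul_eq_one {M : Type*} [Monoid M] {u v a b : M} (hvu : v * u = 1)
    (h : Commute a b) : Commute (u * a * v) (u * b * v) := by
  have hcancel : ∀ c d : M, u * c * v * (u * d * v) = u * (c * d) * v := fun c d => by
    rw [show u * c * v * (u * d * v) = u * c * (v * u) * d * v by simp only [mul_assoc], hvu,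
      mul_one, mul_assoc u c d]
  rw [Commute, SemiconjBy, hcancel, hcancel, h.eq]

theorem IsUnit.commute_of_mul_mul_comm {M : Type*} [Monoid M] {p a b : M} (hp : IsUnit p)
    (ha : Commute a p) (hb : Commute b p) (h : a * p * b = b * p * a) : Commute a b := by
  refine hp.mul_left_cancel ?_
  rw [← mul_assoc, ← mul_assoc, ← ha.eq, ← hb.eq, h]

theorem Matrix.IsDiag.commute {n R : Type*} [Fintype n] [CommSemiring R] {A B : Matrix n n R}
    (hA : A.IsDiag) (hB : B.IsDiag) : Commute A B := by
  classical
  rw [← hA.diagonal_diag, ← hB.diagonal_diag]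
  exact commute_diagonal _ _

open Module.End in
theorem LinearMap.IsSymmetric.exists_orthonormalBasis_eigenvectors_of_commute
    {𝕜 E ι n : Type*} [RCLike 𝕜] [NormedAddCommGroup E] [InnerProductSpace 𝕜 E]
    [FiniteDimensional 𝕜 E] [Fintype n] {T : ι → Module.End 𝕜 E}
    (hT : ∀ i, (T i).IsSymmetric) (hC : Pairwise (Function.onFun Commute T))
    (hn : Module.finrank 𝕜 E = Fintype.card n) :
    ∃ b : OrthonormalBasis n 𝕜 E, ∀ i j, ∃ μ : 𝕜, T i (b j) = μ • b j := by
  classical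
  have hInt := directSum_isInternal_of_pairwise_commute hT hC
  let v (χ : ι → 𝕜) := stdOrthonormalBasis 𝕜 ↥(⨅ i, eigenspace (T i) (χ i))
  let c := hInt.collectedBasis fun χ => (v χ).toBasis
  have hc : Orthonormal 𝕜 c := by
    simpa [c] using (orthogonalFamily_iInf_eigenspaces hT).orthonormal_sigma_orthonormal
      fun χ => (v χ).orthonormal
  -- the joint eigenvalue tuples `χ` range over an infinite type, but only finitely many of
  -- them carry basis vectors
  have : Fintype _ := FiniteDimensional.fintypeBasisIndex c
  let e := Fintype.equivOfCardEq ((Module.finrank_eq_card_basis c).symm.trans hn)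
  refine ⟨(c.toOrthonormalBasis hc).reindex e, fun i j => ⟨(e.symm j).1 i, ?_⟩⟩
  have hmem := hInt.collectedBasis_mem (fun χ => (v χ).toBasis) (e.symm j)
  rw [OrthonormalBasis.reindex_apply, Module.Basis.coe_toOrthonormalBasis]
  exact mem_eigenspace_iff.mp ((Submodule.mem_iInf _).mp hmem i)

theorem Matrix.exists_mem_unitaryGroup_isDiag_of_commute
    {𝕜 ι n : Type*} [RCLike 𝕜] [Fintype n] [DecidableEq n] {A : ι → Matrix n n 𝕜}
    (hA : ∀ i, (A i).IsHermitian) (hC : ∀ i j, Commute (A i) (A j)) :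
    ∃ U ∈ unitaryGroup n 𝕜, ∀ i, (star U * A i * U).IsDiag := by
  obtain ⟨b, hb⟩ := LinearMap.IsSymmetric.exists_orthonormalBasis_eigenvectors_of_commute
    (fun i => isSymmetric_toEuclideanLin_iff.mpr (hA i))
    (fun i j _ => (hC i j).map (toLpLinAlgEquiv (R := 𝕜) (n := n) 2)) finrank_euclideanSpace
  let U := (EuclideanSpace.basisFun n 𝕜).toBasis.toMatrix b.toBasis
  have hU : U ∈ unitaryGroup n 𝕜 :=
    (EuclideanSpace.basisFun n 𝕜).toMatrix_orthonormalBasis_mem_unitary b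
  have hUcol : ∀ k, U *ᵥ Pi.single k 1 = ⇑(b k) := fun k => by
    rw [mulVec_single_one]
    rfl
  have hUstar : ∀ k, star U *ᵥ ⇑(b k) = Pi.single k 1 := fun k => by
    rw [← hUcol, mulVec_mulVec, (mem_unitaryGroup_iff').mp hU, one_mulVec]
  refine ⟨U, hU, fun i j k hjk => ?_⟩
  obtain ⟨μ, hμ⟩ := hb i k
  have hcol : (star U * A i * U) *ᵥ Pi.single k 1 = μ • Pi.single k 1 := by
    have hAb := congrArg WithLp.ofLp hμ
    simp only [toLpLin_apply, WithLp.ofLp_smul] at hAb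
    rw [← mulVec_mulVec, hUcol, ← mulVec_mulVec, hAb, mulVec_smul, hUstar]
  simpa [mulVec_single_one, hjk] using congrFun hcol j

theorem IsMatrixWeight.conjTranspose_mul_mul_same {I I' : Type} [Fintype I] [Fintype I']
    {a b : EReal} {W : ℝ → Matrix I I ℂ} (hW : IsMatrixWeight a b W) {M : Matrix I I' ℂ}
    (hM : Function.Injective M.mulVec) : IsMatrixWeight a b fun x => Mᴴ * W x * M := by
  obtain ⟨hab, hpsd, hpd, hint⟩ := hW
  refine ⟨hab, fun x hx => (hpsd x hx).conjTranspose_mul_mul_same M,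
    hpd.mono fun x hx => hx.conjTranspose_mul_mul_same hM, fun n i j => ?_⟩
  have hentry : (fun x : ℝ => (x : ℂ) ^ n * (Mᴴ * W x * M) i j) =
      fun x : ℝ => ∑ l, ∑ k, Mᴴ i k * ((x : ℂ) ^ n * W x k l) * M l j := by
    funext x
    simp only [mul_apply, Finset.mul_sum, Finset.sum_mul]
    exact Finset.sum_congr rfl fun l _ => Finset.sum_congr rfl fun k _ => by ring
  rw [hentry]
  exact integrable_finsetSum _ fun l _ => integrable_finsetSum _ fun k _ =>
    ((hint n k l).const_mul _).mul_const _

/-- For a matrix weight `W` the following are equivalent: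
(i) `W` is unitarily equivalent to a diagonal matrix weight;
(ii) `W(x) W(y) = W(y) W(x)` for all `x, y`;
(iii) there is a positive definite `P` with `W(x) P W(y) = W(y) P W(x)` and
`W(x) P = P W(x)` for all `x, y`. -/
theorem stmt_1 {N : ℕ} (a b : EReal) (W : ℝ → Matrix (Fin N) (Fin N) ℂ)
    (hW : IsMatrixWeight a b W) :
    ((∃ (U : Matrix (Fin N) (Fin N) ℂ) (Λ : ℝ → Matrix (Fin N) (Fin N) ℂ),
        U * Uᴴ = 1 ∧ Uᴴ * U = 1 ∧ IsMatrixWeight a b Λ ∧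
        (∀ x ∈ weightSupport a b, (Λ x).IsDiag) ∧
        ∀ x ∈ weightSupport a b, W x = U * Λ x * Uᴴ) ↔
      (∀ x ∈ weightSupport a b, ∀ y ∈ weightSupport a b, W x * W y = W y * W x)) ∧
    ((∀ x ∈ weightSupport a b, ∀ y ∈ weightSupport a b, W x * W y = W y * W x) ↔
      (∃ P : Matrix (Fin N) (Fin N) ℂ, P.PosDef ∧
        (∀ x ∈ weightSupport a b, ∀ y ∈ weightSupport a b,
          W x * P * W y = W y * P * W x) ∧
        ∀ x ∈ weightSupport a b, W x * P = P * W x)) := by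
  refine ⟨⟨?_, fun hcomm => ?_⟩, ⟨fun hcomm => ?_, ?_⟩⟩
  · rintro ⟨U, Λ, -, hUU, -, hdiag, hconj⟩ x hx y hy
    rw [hconj x hx, hconj y hy]
    exact ((hdiag x hx).commute (hdiag y hy)).conj_of_mul_eq_one hUU
  · obtain ⟨U, hU, hdiag⟩ := exists_mem_unitaryGroup_isDiag_of_commute
      (A := fun x : weightSupport a b => W x) (fun x => (hW.2.1 x x.2).isHermitian)
      (fun x y => hcomm x x.2 y y.2)
    have hUU : Uᴴ * U = 1 := mem_unitaryGroup_iff'.mp hU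
    have hUU' : U * Uᴴ = 1 := mem_unitaryGroup_iff.mp hU
    refine ⟨U, fun x => Uᴴ * W x * U, hUU', hUU,
      hW.conjTranspose_mul_mul_same fun v w h => ?_, fun x hx => hdiag ⟨x, hx⟩, fun x _ => ?_⟩
    · simpa [mulVec_mulVec, hUU] using congrArg (Uᴴ *ᵥ ·) h
    · simp only [← mul_assoc, hUU', one_mul]
      rw [mul_assoc, hUU', mul_one]
  · exact ⟨1, PosDef.one, fun x hx y hy => by simp only [mul_one, hcomm x hx y hy],
      fun x _ => by rw [mul_one, one_mul]⟩
  · rintro ⟨P, hP, hPcomm, hWP⟩ x hx y hy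
    exact hP.isUnit.commute_of_mul_mul_comm (hWP x hx) (hWP y hy) (hPcomm x hx y hy)
end

section
/- Let W be a matrix weight of size N such that W(x₀) = I for some x₀ in the support of W. Then W reduces to scalar weights (is equivalent to a diagonal matrix weight) if and only if W is unitarily equivalent to a diagonal matrix weight. -/
/-! If `W = M Λ M*` with `Λ` diagonal, then `Λ(x₀) = M⁻¹ (M⁻¹)*` is positive definite and
diagonal, so `Λ(x₀) = D D*` for an invertible diagonal `D`. Then `U = M D` satisfies
`U U* = M Λ(x₀) M* = W(x₀) = I`, and `W = U (D⁻¹ Λ (D⁻¹)*) U*`, where `D⁻¹ Λ (D⁻¹)*` is again a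
diagonal matrix weight. -/

open MeasureTheory Matrix
open scoped ComplexOrder

namespace Matrix

variable {I 𝕜 : Type*} [Fintype I] [DecidableEq I] [RCLike 𝕜]

theorem IsDiag.diagonal_mul_mul_diagonal {α : Type*} [NonUnitalNonAssocSemiring α]
    {A : Matrix I I α} (hA : A.IsDiag) (d e : I → α) : (diagonal d * A * diagonal e).IsDiag := by
  intro i j hij
  simp [diagonal_mul, mul_diagonal, hA hij]

theorem posDef_of_mul_mul_conjTranspose_eq_one {M A : Matrix I I 𝕜} (hM : IsUnit M)
    (h : M * A * Mᴴ = 1) : A.PosDef := by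
  have hA : A = M⁻¹ * 1 * M⁻¹ᴴ := by
    rw [← h, conjTranspose_nonsing_inv, mul_assoc, mul_assoc,
      mul_nonsing_inv _ ((isUnit_iff_isUnit_det _).mp ((isUnit_conjTranspose M).mpr hM)), mul_one,
      ← mul_assoc, nonsing_inv_mul _ ((isUnit_iff_isUnit_det M).mp hM), one_mul]
  rw [hA]
  exact PosDef.one.mul_mul_conjTranspose_same
    (vecMul_injective_of_isUnit (isUnit_nonsing_inv_iff.mpr hM))

theorem PosDef.exists_diagonal_mul_conjTranspose_eq {A : Matrix I I 𝕜} (hA : A.PosDef)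
    (hdiag : A.IsDiag) : ∃ d : I → 𝕜, (∀ i, d i ≠ 0) ∧ diagonal d * (diagonal d)ᴴ = A := by
  choose r hr hrA using fun i => RCLike.pos_iff_exists_ofReal.mp (hA.diag_pos (i := i))
  refine ⟨fun i => (√(r i) : 𝕜),
    fun i => RCLike.ofReal_ne_zero.mpr (Real.sqrt_ne_zero'.mpr (hr i)), ?_⟩
  rw [diagonal_conjTranspose, diagonal_mul_diagonal, ← hdiag.diagonal_diag]
  congr 1
  ext i
  simp [← hrA i, ← RCLike.ofReal_mul, Real.mul_self_sqrt (hr i).le]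

end Matrix

theorem IsMatrixWeight.mul_mul_conjTranspose {I : Type} [Fintype I] [DecidableEq I]
    {a b : EReal} {W : ℝ → Matrix I I ℂ} (hW : IsMatrixWeight a b W) {M : Matrix I I ℂ} (hM : IsUnit M) : IsMatrixWeight a b (fun x => M * W x * Mᴴ) := by
  obtain ⟨hab, hpsd, hpd, hint⟩ := hW
  refine ⟨hab, fun x hx => (hpsd x hx).mul_mul_conjTranspose_same M, ?_, fun n i j => ?_⟩
  · filter_upwards [hpd] with x hx
    exact hx.mul_mul_conjTranspose_same (vecMul_injective_of_isUnit hM)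
  · simp only [mul_apply, Finset.sum_mul, Finset.mul_sum, conjTranspose_apply]
    refine integrable_finsetSum _ fun l _ => integrable_finsetSum _ fun k _ => ?_
    refine ((hint n k l).const_mul (M i k * star (M j l))).congr
      (Filter.Eventually.of_forall fun x => ?_)
    ring

theorem stmt_2_general {N : ℕ} (a b : EReal) (W : ℝ → Matrix (Fin N) (Fin N) ℂ)
    (x₀ : ℝ) (hx₀ : x₀ ∈ weightSupport a b) (hWx₀ : W x₀ = 1) :
    (∃ (M : Matrix (Fin N) (Fin N) ℂ) (Λ : ℝ → Matrix (Fin N) (Fin N) ℂ),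
        IsUnit M ∧ IsMatrixWeight a b Λ ∧ (∀ x ∈ weightSupport a b, (Λ x).IsDiag) ∧
        ∀ x ∈ weightSupport a b, W x = M * Λ x * Mᴴ) ↔
      (∃ (U : Matrix (Fin N) (Fin N) ℂ) (Λ : ℝ → Matrix (Fin N) (Fin N) ℂ),
        U * Uᴴ = 1 ∧ Uᴴ * U = 1 ∧ IsMatrixWeight a b Λ ∧
        (∀ x ∈ weightSupport a b, (Λ x).IsDiag) ∧
        ∀ x ∈ weightSupport a b, W x = U * Λ x * Uᴴ) := by
  constructor
  · rintro ⟨M, Λ, hM, hΛ, hdiag, hrep⟩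
    have hΛx₀ : M * Λ x₀ * Mᴴ = 1 := (hrep x₀ hx₀).symm.trans hWx₀
    obtain ⟨d, hd, hdd⟩ := (posDef_of_mul_mul_conjTranspose_eq_one hM hΛx₀)
      |>.exists_diagonal_mul_conjTranspose_eq (hdiag x₀ hx₀)
    set D := diagonal d
    set E := diagonal fun i => (d i)⁻¹
    have hDE : D * E = 1 := by
      rw [diagonal_mul_diagonal, ← diagonal_one]
      exact congrArg diagonal (funext fun i => mul_inv_cancel₀ (hd i))
    have hU : M * D * (M * D)ᴴ = 1 := by
      rw [conjTranspose_mul, mul_assoc, ← mul_assoc D, hdd, ← mul_assoc, hΛx₀]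
    refine ⟨M * D, fun x => E * Λ x * Eᴴ, hU, mul_eq_one_comm.mp hU,
      hΛ.mul_mul_conjTranspose ⟨⟨E, D, mul_eq_one_comm.mp hDE, hDE⟩, rfl⟩,
      fun x hx => ?_, fun x hx => ?_⟩
    · rw [diagonal_conjTranspose]
      exact (hdiag x hx).diagonal_mul_mul_diagonal _ _
    · have hDEH : Eᴴ * Dᴴ = 1 := by rw [← conjTranspose_mul, hDE, conjTranspose_one]
      rw [hrep x hx, conjTranspose_mul]
      simp only [← mul_assoc]
      rw [mul_assoc M D, hDE, mul_one, mul_assoc _ Eᴴ, hDEH, mul_one]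
  · rintro ⟨U, Λ, hUU, hUU', hΛ, hdiag, hrep⟩
    exact ⟨U, Λ, ⟨⟨U, Uᴴ, hUU, hUU'⟩, rfl⟩, hΛ, hdiag, hrep⟩

/-- If `W` is a matrix weight with `W(x₀) = I` for some `x₀` in its support,
then `W` is equivalent to a diagonal matrix weight if and only if `W` is unitarily
equivalent to a diagonal matrix weight. -/
theorem stmt_2 {N : ℕ} (a b : EReal) (W : ℝ → Matrix (Fin N) (Fin N) ℂ)
    (hW : IsMatrixWeight a b W)
    (x₀ : ℝ) (hx₀ : x₀ ∈ weightSupport a b) (hWx₀ : W x₀ = 1) :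
    (∃ (M : Matrix (Fin N) (Fin N) ℂ) (Λ : ℝ → Matrix (Fin N) (Fin N) ℂ),
        IsUnit M ∧ IsMatrixWeight a b Λ ∧ (∀ x ∈ weightSupport a b, (Λ x).IsDiag) ∧
        ∀ x ∈ weightSupport a b, W x = M * Λ x * Mᴴ) ↔
      (∃ (U : Matrix (Fin N) (Fin N) ℂ) (Λ : ℝ → Matrix (Fin N) (Fin N) ℂ),
        U * Uᴴ = 1 ∧ Uᴴ * U = 1 ∧ IsMatrixWeight a b Λ ∧
        (∀ x ∈ weightSupport a b, (Λ x).IsDiag) ∧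
        ∀ x ∈ weightSupport a b, W x = U * Λ x * Uᴴ) :=
  stmt_2_general a b W x₀ hx₀ hWx₀
end

section
/- Let W be a matrix weight of size N and let T ∈ Mat_N(ℂ) satisfy T W(x) = W(x) T* for almost every x in the support of W. Then every eigenvalue of T is real and T is diagonalizable (its nilpotent part in the Jordan decomposition is zero). -/
open MeasureTheory Matrix
open scoped ComplexOrder

/-!
Pick a point `x` where both `W x` is positive definite and `T W(x) = W(x) T*` (such points exist
because the interval is nonempty and open, so has positive measure). With `B = W(x)^{1/2}`, the
relation says exactly that `B⁻¹ T B` is Hermitian; the spectral theorem then writes `T` as an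
invertible conjugate of a real diagonal matrix.
-/

open scoped MatrixOrder

theorem isSelfAdjoint_units_conj_of_mul_sq_eq {R : Type*} [Monoid R] [StarMul R]
    {T : R} {B : Rˣ} (hB : IsSelfAdjoint (B : R))
    (h : T * (B * B) = (B * B) * star T) : IsSelfAdjoint ((↑B⁻¹ : R) * T * B) := by
  have hB_inv : star (↑B⁻¹ : R) = ↑B⁻¹ := by
    rw [← Units.coe_star_inv, show star B = B from Units.ext hB]
  calc star ((↑B⁻¹ : R) * T * B) = B * star T * ↑B⁻¹ := by
        rw [star_mul, star_mul, hB, hB_inv, mul_assoc]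
    _ = ↑B⁻¹ * ((B * B) * star T) * ↑B⁻¹ := by simp [mul_assoc]
    _ = ↑B⁻¹ * T * B := by rw [← h]; simp [mul_assoc]

section

variable {n : Type*} [Fintype n] [DecidableEq n]

theorem exists_units_isHermitian_conj_of_posDef {A T : Matrix n n ℂ} (hA : A.PosDef)
    (h : T * A = A * Tᴴ) :
    ∃ P : (Matrix n n ℂ)ˣ, ((↑P⁻¹ : Matrix n n ℂ) * T * (P : Matrix n n ℂ)).IsHermitian := by
  have hA_nonneg : 0 ≤ A := hA.posSemidef.nonneg
  obtain ⟨B, hB⟩ : IsUnit (CFC.sqrt A) := (CFC.isUnit_sqrt_iff A).2 hA.isUnit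
  refine ⟨B, isSelfAdjoint_units_conj_of_mul_sq_eq ?_ ?_⟩
  · exact hB ▸ (CFC.sqrt_nonneg A).isSelfAdjoint
  · rwa [hB, CFC.sqrt_mul_sqrt_self A]

theorem exists_diagonal_real_of_isHermitian_units_conj {T : Matrix n n ℂ} (P : (Matrix n n ℂ)ˣ)
    (hS : ((↑P⁻¹ : Matrix n n ℂ) * T * (P : Matrix n n ℂ)).IsHermitian) :
    ∃ (Q : (Matrix n n ℂ)ˣ) (d : n → ℝ),
      T = (Q : Matrix n n ℂ) * diagonal (fun i => (d i : ℂ)) * (↑Q⁻¹ : Matrix n n ℂ) := by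
  obtain ⟨U, d, hS_diag⟩ : ∃ (U : unitary (Matrix n n ℂ)) (d : n → ℝ),
      (↑P⁻¹ : Matrix n n ℂ) * T * P = U * diagonal (fun i => (d i : ℂ)) * star (U : Matrix n n ℂ) :=
    ⟨_, _, hS.spectral_theorem⟩
  refine ⟨P * Unitary.toUnits U, d, ?_⟩
  calc T = P * ((↑P⁻¹ : Matrix n n ℂ) * T * P) * (↑P⁻¹ : Matrix n n ℂ) := by simp [mul_assoc]
    _ = _ := by rw [hS_diag]; simp [mul_assoc]

end

theorem ae_restrict_weightSupport_neBot {a b : EReal} (hab : a < b) :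
    (ae (volume.restrict (weightSupport a b))).NeBot := by
  refine ae_restrict_neBot.2 (IsOpen.measure_ne_zero volume ?_ ?_)
  · exact isOpen_Ioo.preimage continuous_coe_real_ereal
  · obtain ⟨x, hax, hxb⟩ := EReal.exists_between_coe_real hab
    exact ⟨x, hax, hxb⟩

/-- If `W` is a matrix weight and `T W(x) = W(x) T*` for almost every `x`
in the support of `W`, then all eigenvalues of `T` are real and `T` is diagonalizable. -/
theorem stmt_4 {N : ℕ} (a b : EReal) (W : ℝ → Matrix (Fin N) (Fin N) ℂ)
    (hW : IsMatrixWeight a b W)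
    (T : Matrix (Fin N) (Fin N) ℂ)
    (hT : ∀ᵐ x : ℝ ∂(volume.restrict (weightSupport a b)), T * W x = W x * Tᴴ) :
    (∀ μ ∈ spectrum ℂ T, ∃ r : ℝ, μ = (r : ℂ)) ∧
    ∃ (M M' D : Matrix (Fin N) (Fin N) ℂ),
      M * M' = 1 ∧ M' * M = 1 ∧ D.IsDiag ∧ T = M * D * M' := by
  obtain ⟨hab, -, hW_posDef, -⟩ := hW
  have := ae_restrict_weightSupport_neBot hab
  obtain ⟨x, hWx, hTx⟩ := (hW_posDef.and hT).exists
  obtain ⟨P, hP⟩ := exists_units_isHermitian_conj_of_posDef hWx hTx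
  obtain ⟨Q, d, rfl⟩ := exists_diagonal_real_of_isHermitian_units_conj P hP
  refine ⟨fun μ hμ => ?_, Q, ↑Q⁻¹, _, Q.mul_inv, Q.inv_mul, isDiag_diagonal _, rfl⟩
  rw [spectrum.units_conjugate, spectrum_diagonal] at hμ
  obtain ⟨i, rfl⟩ := hμ
  exact ⟨d i, rfl⟩
end

section
/- Let W be a matrix weight of size N whose zeroth moment M₀ = ∫ W(x) dx equals the identity matrix I. Then every T ∈ Mat_N(ℂ) with T W(x) = W(x) T* for a.e. x is Hermitian (T = T*), and the commutant algebra C = {T ∈ Mat_N(ℂ) : T W(x) = W(x) T for a.e. x} decomposes as C = C_ℝ ⊕ i C_ℝ, where C_ℝ = {T ∈ Mat_N(ℂ) : T W(x) = W(x) T* for a.e. x}. -/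
/-!
Integrating `T W(x) = W(x) T*` over `(a,b)` gives `T M₀ = M₀ T*`, so `M₀ = I` forces `T = T*`.
Hence `C_ℝ` consists of the Hermitian matrices commuting with `W` a.e. As every `W(x)` is
Hermitian, `T` commutes with `W(x)` iff `T*` does, so the real and imaginary parts
`(T + T*)/2` and `(T - T*)/2i` of any `T ∈ C` lie in `C_ℝ`, and the decomposition
`T = ℜ T + i ℑ T` of a matrix into Hermitian parts is unique.
-/

open MeasureTheory Matrix
open scoped ComplexOrder

open Complex
open scoped ComplexStarModule

section StarModule

variable {A : Type*} [AddCommGroup A] [Module ℂ A] [StarAddMonoid A] [StarModule ℂ A]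

lemma IsSelfAdjoint.coe_realPart_add_I_smul {x y : A} (hx : IsSelfAdjoint x)
    (hy : IsSelfAdjoint y) : (ℜ (x + I • y) : A) = x := by
  simp [realPart_I_smul, hx.coe_realPart, hy.imaginaryPart]

lemma IsSelfAdjoint.coe_imaginaryPart_add_I_smul {x y : A} (hx : IsSelfAdjoint x)
    (hy : IsSelfAdjoint y) : (ℑ (x + I • y) : A) = y := by
  simp [imaginaryPart_I_smul, hx.imaginaryPart, hy.coe_realPart]

lemma IsSelfAdjoint.eq_zero_of_add_I_smul_eq_zero {x y : A} (hx : IsSelfAdjoint x)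
    (hy : IsSelfAdjoint y) (h : x + I • y = 0) : x = 0 ∧ y = 0 :=
  ⟨by simpa [h] using (hx.coe_realPart_add_I_smul hy).symm,
    by simpa [h] using (hx.coe_imaginaryPart_add_I_smul hy).symm⟩

end StarModule

section StarAlgebra

variable {A : Type*} [Ring A] [StarRing A] [Algebra ℂ A] [StarModule ℂ A] {t w : A}

lemma Commute.realPart (hw : IsSelfAdjoint w) (h : Commute t w) : Commute (ℜ t : A) w := by
  rw [realPart_apply_coe]
  exact (h.add_left (hw ▸ h.star_star)).smul_left _

lemma Commute.imaginaryPart (hw : IsSelfAdjoint w) (h : Commute t w) :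
    Commute (ℑ t : A) w := by
  rw [imaginaryPart_apply_coe]
  exact ((h.sub_left (hw ▸ h.star_star)).smul_left _).smul_left _

end StarAlgebra

lemma measurableSet_weightSupport (a b : EReal) : MeasurableSet (weightSupport a b) :=
  (isOpen_Ioo.preimage continuous_coe_real_ereal).measurableSet

section MatIntegral

variable {ι : Type} {S : Set ℝ} {F : ℝ → Matrix ι ι ℂ}

lemma matIntegral_congr_ae {G : ℝ → Matrix ι ι ℂ} (h : ∀ᵐ x ∂(volume.restrict S), F x = G x) :
    matIntegral S F = matIntegral S G := by
  ext i j
  exact integral_congr_ae (h.mono fun x hx => congrFun₂ hx i j)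

lemma matIntegral_mul_left [Fintype ι] (hF : ∀ i j, IntegrableOn (fun x => F x i j) S)
    (M : Matrix ι ι ℂ) :
    matIntegral S (fun x => M * F x) = M * matIntegral S F := by
  ext i j
  simp only [matIntegral, of_apply, mul_apply]
  rw [integral_finsetSum _ fun k _ => (hF k j).const_mul (M i k)]
  simp_rw [integral_const_mul]

lemma matIntegral_mul_right [Fintype ι] (hF : ∀ i j, IntegrableOn (fun x => F x i j) S)
    (M : Matrix ι ι ℂ) :
    matIntegral S (fun x => F x * M) = matIntegral S F * M := by
  ext i j
  simp only [matIntegral, of_apply, mul_apply]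
  rw [integral_finsetSum _ fun k _ => (hF i k).mul_const (M k j)]
  simp_rw [integral_mul_const]

end MatIntegral

namespace IsMatrixWeight

variable {ι : Type} {a b : EReal} {W : ℝ → Matrix ι ι ℂ}

lemma integrableOn_apply (hW : IsMatrixWeight a b W) (i j : ι) :
    IntegrableOn (fun x => W x i j) (weightSupport a b) := by
  simpa using hW.2.2.2 0 i j

lemma ae_isSelfAdjoint [Fintype ι] (hW : IsMatrixWeight a b W) :
    ∀ᵐ x ∂(volume.restrict (weightSupport a b)), IsSelfAdjoint (W x) := by
  filter_upwards [ae_restrict_mem (measurableSet_weightSupport a b)] with x hx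
  exact (hW.2.1 x hx).isHermitian.isSelfAdjoint

lemma mul_matIntegral_eq_of_mem_CR [Fintype ι] (hW : IsMatrixWeight a b W) {T : Matrix ι ι ℂ}
    (hT : T ∈ CR a b W) :
    T * matIntegral (weightSupport a b) W = matIntegral (weightSupport a b) W * Tᴴ := by
  rw [← matIntegral_mul_left hW.integrableOn_apply, ← matIntegral_mul_right hW.integrableOn_apply]
  exact matIntegral_congr_ae hT

end IsMatrixWeight

lemma mem_CR_iff_ae_commute {ι : Type} [Fintype ι] {a b : EReal} {W : ℝ → Matrix ι ι ℂ}
    {T : Matrix ι ι ℂ} (hT : IsSelfAdjoint T) :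
    T ∈ CR a b W ↔ ∀ᵐ x ∂(volume.restrict (weightSupport a b)), Commute T (W x) := by
  rw [CR, Set.mem_ofPred_eq, ← star_eq_conjTranspose, hT]
  rfl

/-- If the zeroth moment of the matrix weight `W` is the identity, then every
`T ∈ C_ℝ(W)` is Hermitian, and the commutant algebra
`C = {T : T W(x) = W(x) T a.e.}` decomposes as `C = C_ℝ ⊕ i C_ℝ`. -/
theorem stmt_5 {N : ℕ} (a b : EReal) (W : ℝ → Matrix (Fin N) (Fin N) ℂ)
    (hW : IsMatrixWeight a b W)
    (hM₀ : matIntegral (weightSupport a b) W = 1) :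
    (∀ T ∈ CR a b W, T = Tᴴ) ∧
    (∀ T : Matrix (Fin N) (Fin N) ℂ,
      (∀ᵐ x : ℝ ∂(volume.restrict (weightSupport a b)), T * W x = W x * T) ↔
        ∃ T₁ ∈ CR a b W, ∃ T₂ ∈ CR a b W, T = T₁ + Complex.I • T₂) ∧
    (∀ T₁ ∈ CR a b W, ∀ T₂ ∈ CR a b W, T₁ + Complex.I • T₂ = 0 → T₁ = 0 ∧ T₂ = 0) := by
  have hCR : ∀ T ∈ CR a b W, IsSelfAdjoint T := fun T hT =>
    (by simpa [hM₀] using (hW.mul_matIntegral_eq_of_mem_CR hT).symm : Tᴴ = T)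
  refine ⟨fun T hT => (hCR T hT).symm, fun T => ⟨fun hT => ?_, ?_⟩,
    fun T₁ hT₁ T₂ hT₂ => (hCR T₁ hT₁).eq_zero_of_add_I_smul_eq_zero (hCR T₂ hT₂)⟩
  · refine ⟨ℜ T, (mem_CR_iff_ae_commute (ℜ T).2).2 ?_, ℑ T, (mem_CR_iff_ae_commute (ℑ T).2).2 ?_,
      (realPart_add_I_smul_imaginaryPart T).symm⟩
    · filter_upwards [hT, hW.ae_isSelfAdjoint] with x hx hWx using Commute.realPart hWx hx
    · filter_upwards [hT, hW.ae_isSelfAdjoint] with x hx hWx using Commute.imaginaryPart hWx hx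
  · rintro ⟨T₁, hT₁, T₂, hT₂, rfl⟩
    filter_upwards [(mem_CR_iff_ae_commute (hCR T₁ hT₁)).1 hT₁,
      (mem_CR_iff_ae_commute (hCR T₂ hT₂)).1 hT₂] with x h₁ h₂ using h₁.add_left (h₂.smul_left I)
end

section
/- Let W = W₁ ⊕ ⋯ ⊕ W_j and W' = W'₁ ⊕ ⋯ ⊕ W'_{j'} be block-diagonal matrix weights whose diagonal blocks W_i and W'_k are irreducible matrix weights. If W and W' are unitarily equivalent, then j = j' and there exists a permutation σ of {1, …, j} such that W_i is unitarily equivalent to W'_{σ(i)} for all 1 ≤ i ≤ j. -/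
open MeasureTheory Matrix
open scoped ComplexOrder

/-!
The blocks `T = U_{ki}` of a unitary `U` intertwining the two direct sums intertwine the irreducible
summands, so `TᴴT` and `TTᴴ` commute with irreducible weights. A Hermitian matrix commuting with an
irreducible weight is scalar, since its eigenspaces would split the weight; hence
`TᴴT = TTᴴ = c_{ki} • 1`, and `T / √c_{ki}` is a unitary equivalence whenever `c_{ki} ≠ 0`.
Unitarity of `U` makes `(c_{ki})` doubly stochastic, so it is square and, by Birkhoff's theorem,
nonzero along some permutation.
-/

theorem Matrix.apply_eq_zero_of_commute_diagonal {n α : Type*} [Fintype n] [DecidableEq n]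
    [CommRing α] [NoZeroDivisors α] {d : n → α} {A : Matrix n n α} (h : Commute (diagonal d) A)
    {i j : n} (hij : d i ≠ d j) : A i j = 0 := by
  have hij' := congrFun (congrFun h.eq i) j
  rw [diagonal_mul, mul_diagonal] at hij'
  have : (d i - d j) * A i j = 0 := by rw [sub_mul, hij', mul_comm, sub_self]
  exact (mul_eq_zero.mp this).resolve_left (sub_ne_zero.mpr hij)

section SigmaBlocks

variable {α ι κ : Type*} {m : κ → Type*} {n : ι → Type*}

theorem Matrix.submatrix_sigmaMk_mul {l o p q : Type*} [Fintype κ] [∀ k, Fintype (m k)]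
    [NonUnitalNonAssocSemiring α]
    (X : Matrix l (Σ k, m k) α) (Y : Matrix (Σ k, m k) o α) (f : p → l) (g : q → o) :
    (X * Y).submatrix f g =
      ∑ k, X.submatrix f (Sigma.mk k) * Y.submatrix (Sigma.mk k) g := by
  ext r c
  simp [mul_apply, Matrix.sum_apply, Fintype.sum_sigma]

theorem Matrix.submatrix_blockDiagonal'_mul {o p : Type*} [Fintype κ] [DecidableEq κ]
    [∀ k, Fintype (m k)] [NonUnitalNonAssocSemiring α]
    (B : ∀ k, Matrix (m k) (m k) α) (U : Matrix (Σ k, m k) o α) (k : κ) (f : p → o) :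
    (blockDiagonal' B * U).submatrix (Sigma.mk k) f = B k * U.submatrix (Sigma.mk k) f := by
  ext r c
  simp only [submatrix_apply, mul_apply, Fintype.sum_sigma]
  rw [Finset.sum_eq_single k (fun k' _ hk' => by simp [blockDiagonal'_apply_ne _ _ _ hk'.symm])
    (by simp)]
  simp [blockDiagonal'_apply_eq]

theorem Matrix.submatrix_mul_blockDiagonal' {o p : Type*} [Fintype ι] [DecidableEq ι]
    [∀ i, Fintype (n i)] [NonUnitalNonAssocSemiring α]
    (A : ∀ i, Matrix (n i) (n i) α) (U : Matrix o (Σ i, n i) α) (i : ι) (f : p → o) :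
    (U * blockDiagonal' A).submatrix f (Sigma.mk i) = U.submatrix f (Sigma.mk i) * A i := by
  ext r c
  simp only [submatrix_apply, mul_apply, Fintype.sum_sigma]
  rw [Finset.sum_eq_single i (fun i' _ hi' => by simp [blockDiagonal'_apply_ne _ _ _ hi'])
    (by simp)]
  simp [blockDiagonal'_apply_eq]

theorem Matrix.sum_eq_one_of_conjTranspose_mul_self_eq_one [Fintype ι] [DecidableEq ι]
    [Fintype κ] [∀ k, Fintype (m k)] [∀ i, Fintype (n i)] [∀ i, DecidableEq (n i)]
    {U : Matrix (Σ k, m k) (Σ i, n i) ℂ} (hU : Uᴴ * U = 1) {c : κ → ι → ℝ}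
    (hc : ∀ k i, (U.submatrix (Sigma.mk k) (Sigma.mk i))ᴴ * U.submatrix (Sigma.mk k) (Sigma.mk i)
      = (c k i : ℂ) • 1) (i : ι) [Nonempty (n i)] : ∑ k, c k i = 1 := by
  obtain ⟨q⟩ := ‹Nonempty (n i)›
  have h := congrFun (congrFun (congrArg (·.submatrix (Sigma.mk i) (Sigma.mk i)) hU) q) q
  simp only [submatrix_sigmaMk_mul, ← conjTranspose_submatrix, hc] at h
  exact_mod_cast (by simpa [Matrix.sum_apply] using h : (∑ k, c k i : ℂ) = 1)

end SigmaBlocks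

theorem Fintype.card_eq_of_sum_eq_one {R ι κ : Type*} [Fintype ι] [Fintype κ]
    [AddCommMonoidWithOne R] [CharZero R] {c : κ → ι → R} (hcol : ∀ i, ∑ k, c k i = 1)
    (hrow : ∀ k, ∑ i, c k i = 1) : Fintype.card ι = Fintype.card κ := by
  have h : (Fintype.card ι : R) = Fintype.card κ :=
    calc (Fintype.card ι : R) = ∑ i, ∑ k, c k i := by simp [hcol]
      _ = ∑ k, ∑ i, c k i := Finset.sum_comm
      _ = Fintype.card κ := by simp [hrow]
  exact_mod_cast h

/-- By Birkhoff's theorem, a doubly stochastic matrix dominates a positive multiple of some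
permutation matrix. -/
theorem Matrix.exists_perm_apply_ne_zero_of_mem_doublyStochastic {R n : Type*} [Fintype n]
    [DecidableEq n] [Field R] [LinearOrder R] [IsStrictOrderedRing R] {M : Matrix n n R}
    (hM : M ∈ doublyStochastic R n) : ∃ σ : Equiv.Perm n, ∀ i, M i (σ i) ≠ 0 := by
  obtain ⟨w, hw0, hw1, hwM⟩ := exists_eq_sum_perm_of_mem_doublyStochastic hM
  obtain ⟨σ, hσ⟩ : ∃ σ, w σ ≠ 0 := by
    by_contra! h
    simp [h] at hw1
  refine ⟨σ, fun i => ne_of_gt ?_⟩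
  calc 0 < w σ * σ.permMatrix R i (σ i) := by
        simpa [Equiv.Perm.permMatrix, PEquiv.toMatrix_apply] using (hw0 σ).lt_of_ne' hσ
    _ ≤ ∑ τ, w τ * τ.permMatrix R i (σ i) :=
        Finset.single_le_sum (f := fun τ => w τ * τ.permMatrix R i (σ i))
          (fun τ _ => mul_nonneg (hw0 τ) (by
            rw [Equiv.Perm.permMatrix, PEquiv.toMatrix_apply]; split_ifs <;> simp))
          (Finset.mem_univ σ)
    _ = M i (σ i) := by simp [← hwM, Matrix.sum_apply]

section MatrixWeight

variable {a b : EReal} {I I' I'' J : Type}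

theorem IsMatrixWeight.submatrix {W : ℝ → Matrix I I ℂ} (hW : IsMatrixWeight a b W)
    {f : J → I} (hf : Function.Injective f) :
    IsMatrixWeight a b (fun x => (W x).submatrix f f) :=
  ⟨hW.1, fun x hx => (hW.2.1 x hx).submatrix f, hW.2.2.1.mono fun _ hx => hx.submatrix hf,
    fun n i j => hW.2.2.2 n (f i) (f j)⟩

theorem IsMatrixWeight.conj [Fintype I] [DecidableEq I] [Fintype I'] [DecidableEq I']
    {W : ℝ → Matrix I I ℂ} (hW : IsMatrixWeight a b W) {M : Matrix I' I ℂ} (hM : M * Mᴴ = 1) :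
    IsMatrixWeight a b (fun x => M * W x * Mᴴ) := by
  have hinj : Function.Injective M.vecMul := fun v w h => by
    simpa [vecMul_vecMul, hM] using congrArg (· ᵥ* Mᴴ) h
  refine ⟨hW.1, fun x hx => (hW.2.1 x hx).mul_mul_conjTranspose_same M,
    hW.2.2.1.mono fun _ hx => hx.mul_mul_conjTranspose_same hinj, fun n i j => ?_⟩
  have hentry : (fun x : ℝ => (x : ℂ) ^ n * (M * W x * Mᴴ) i j) =
      fun x : ℝ => ∑ l, ∑ k, (M i k * star (M j l)) * ((x : ℂ) ^ n * W x k l) := by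
    funext x
    simp only [mul_apply, conjTranspose_apply, Finset.sum_mul, Finset.mul_sum]
    exact Finset.sum_congr rfl fun _ _ => Finset.sum_congr rfl fun _ _ => by ring
  rw [hentry]
  exact integrable_finsetSum _ fun l _ =>
    integrable_finsetSum _ fun k _ => (hW.2.2.2 n k l).const_mul _

theorem WeightEquiv.trans [Fintype I] [DecidableEq I] [Fintype I'] [DecidableEq I']
    [Fintype I''] [DecidableEq I''] {W : ℝ → Matrix I I ℂ} {W' : ℝ → Matrix I' I' ℂ}
    {W'' : ℝ → Matrix I'' I'' ℂ} (h : WeightEquiv a b W W') (h' : WeightEquiv a b W' W'') :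
    WeightEquiv a b W W'' := by
  obtain ⟨M, M', hMM', hM'M, hW'⟩ := h
  obtain ⟨N, N', hNN', hN'N, hW''⟩ := h'
  refine ⟨N * M, M' * N', ?_, ?_, fun x hx => ?_⟩
  · rw [Matrix.mul_assoc, ← Matrix.mul_assoc M, hMM', Matrix.one_mul, hNN']
  · rw [Matrix.mul_assoc, ← Matrix.mul_assoc N', hN'N, Matrix.one_mul, hM'M]
  · rw [hW'' x hx, hW' x hx, conjTranspose_mul]
    simp only [Matrix.mul_assoc]

theorem Reduces.of_weightEquiv [Fintype I] [DecidableEq I] {W W' : ℝ → Matrix I I ℂ}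
    (h : WeightEquiv a b W W') (hW' : Reduces a b W') : Reduces a b W := by
  obtain ⟨N₁, N₂, W₁, W₂, hN₁, hN₂, hcard, hW₁, hW₂, hequiv⟩ := hW'
  exact ⟨N₁, N₂, W₁, W₂, hN₁, hN₂, hcard, hW₁, hW₂, h.trans hequiv⟩

theorem unitaryWeightEquiv_iff [Fintype I] [DecidableEq I] [Fintype I'] [DecidableEq I']
    {W : ℝ → Matrix I I ℂ} {W' : ℝ → Matrix I' I' ℂ} :
    UnitaryWeightEquiv a b W W' ↔ ∃ M : Matrix I' I ℂ, M * Mᴴ = 1 ∧ Mᴴ * M = 1 ∧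
      ∀ x ∈ weightSupport a b, W' x * M = M * W x := by
  refine exists_congr fun M => and_congr_right fun hM => and_congr_right fun hM' =>
    forall₂_congr fun x _ => ⟨fun h => ?_, fun h => ?_⟩
  · rw [h, Matrix.mul_assoc, hM', Matrix.mul_one]
  · rw [← h, Matrix.mul_assoc, hM, Matrix.mul_one]

theorem reduces_of_apply_eq_zero [Fintype I] [DecidableEq I] {W : ℝ → Matrix I I ℂ}
    (hW : IsMatrixWeight a b W) (p : I → Prop) [DecidablePred p] (hp : ∃ i, p i) (hnp : ∃ i, ¬ p i)
    (hzero : ∀ x ∈ weightSupport a b, ∀ i j, p i → ¬ p j → W x i j = 0) :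
    Reduces a b W := by
  obtain ⟨i₀, hi₀⟩ := hp
  obtain ⟨j₀, hj₀⟩ := hnp
  have : Nonempty {i // p i} := ⟨⟨i₀, hi₀⟩⟩
  have : Nonempty {i // ¬ p i} := ⟨⟨j₀, hj₀⟩⟩
  let e : Fin (Fintype.card {i // p i}) ⊕ Fin (Fintype.card {i // ¬ p i}) ≃ I :=
    (Equiv.sumCongr (Fintype.equivFin _).symm (Fintype.equivFin _).symm).trans
      (Equiv.sumCompl p)
  refine ⟨_, _, fun x => (W x).submatrix (e ∘ Sum.inl) (e ∘ Sum.inl),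
    fun x => (W x).submatrix (e ∘ Sum.inr) (e ∘ Sum.inr), Fintype.card_pos, Fintype.card_pos,
    by simpa using Fintype.card_congr e, hW.submatrix (e.injective.comp Sum.inl_injective),
    hW.submatrix (e.injective.comp Sum.inr_injective),
    (1 : Matrix I I ℂ).submatrix e id, (1 : Matrix I I ℂ).submatrix id e, ?_, ?_, ?_⟩
  · ext i j; simp [mul_apply, one_apply]
  · simp only [submatrix_mul_equiv, Matrix.one_mul, submatrix_id_id]
  · intro x hx
    have hzero' (i : {i // p i}) (j : {i // ¬ p i}) : W x i j = 0 := hzero x hx _ _ i.2 j.2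
    ext (i | i) (j | j) <;> simp [mul_apply, one_apply, e]
    · exact (hzero' _ _).symm
    · rw [← (hW.2.1 x hx).isHermitian.apply, hzero', star_zero]

end MatrixWeight

section Irreducible

variable {a b : EReal} {I I' : Type} [Fintype I] [DecidableEq I] [Fintype I'] [DecidableEq I']

theorem IsMatrixWeight.exists_eq_smul_one_of_commute {W : ℝ → Matrix I I ℂ}
    (hW : IsMatrixWeight a b W) (hirr : ¬ Reduces a b W) {S : Matrix I I ℂ} (hS : S.IsHermitian)
    (hcomm : ∀ x ∈ weightSupport a b, Commute S (W x)) : ∃ c : ℝ, S = (c : ℂ) • 1 := by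
  rcases isEmpty_or_nonempty I with _ | ⟨⟨i₀⟩⟩
  · exact ⟨0, Subsingleton.elim _ _⟩
  set U := hS.eigenvectorUnitary
  set d := hS.eigenvalues
  by_cases hconst : ∀ i, d i = d i₀
  · refine ⟨d i₀, ?_⟩
    have hdiag : diagonal (RCLike.ofReal ∘ d) = ((d i₀ : ℝ) : ℂ) • (1 : Matrix I I ℂ) := by
      rw [smul_one_eq_diagonal]
      exact congrArg diagonal (funext fun i => by simp [hconst i])
    conv_lhs => rw [hS.spectral_theorem, hdiag]
    simp
  obtain ⟨j₀, hj₀⟩ := not_forall.mp hconst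
  have hU : (star U : Matrix I I ℂ) * (star U : Matrix I I ℂ)ᴴ = 1 := by
    simp [← star_eq_conjTranspose]
  have hdiag : ∀ x ∈ weightSupport a b,
      Commute (diagonal (RCLike.ofReal ∘ d))
        ((star U : Matrix I I ℂ) * W x * (star U : Matrix I I ℂ)ᴴ) := by
    intro x hx
    rw [← star_eq_conjTranspose, star_star, ← hS.conjStarAlgAut_star_eigenvectorUnitary,
      ← Unitary.conjStarAlgAut_star_apply (S := ℂ)]
    exact (hcomm x hx).map _
  -- in an eigenbasis of `S`, `W` has no entries between the eigenvalue `d i₀` and the others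
  refine (hirr (Reduces.of_weightEquiv ⟨star U, U, by simp, by simp, fun x _ => ?_⟩
    (reduces_of_apply_eq_zero (hW.conj hU) (fun i => d i = d i₀) ⟨i₀, rfl⟩ ⟨j₀, hj₀⟩
      fun x hx i j hi hj => ?_))).elim
  · rfl
  · refine apply_eq_zero_of_commute_diagonal (hdiag x hx) ?_
    simpa [hi] using Ne.symm hj

theorem IsMatrixWeight.exists_conjTranspose_mul_self_eq_smul_one [Nonempty I]
    {W : ℝ → Matrix I I ℂ} {W' : ℝ → Matrix I' I' ℂ} (hW : IsMatrixWeight a b W)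
    (hW' : IsMatrixWeight a b W') (hirr : ¬ Reduces a b W) (hirr' : ¬ Reduces a b W')
    {T : Matrix I' I ℂ} (hT : ∀ x ∈ weightSupport a b, W' x * T = T * W x) :
    ∃ c : ℝ, 0 ≤ c ∧ Tᴴ * T = (c : ℂ) • 1 ∧ T * Tᴴ = (c : ℂ) • 1 := by
  have hT' : ∀ x ∈ weightSupport a b, Tᴴ * W' x = W x * Tᴴ := fun x hx => by
    simpa [(hW.2.1 x hx).isHermitian.eq, (hW'.2.1 x hx).isHermitian.eq] using
      congrArg conjTranspose (hT x hx)
  obtain ⟨c, hc⟩ := hW.exists_eq_smul_one_of_commute hirr (isHermitian_conjTranspose_mul_self T)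
    fun x hx => by
      change Tᴴ * T * W x = W x * (Tᴴ * T)
      rw [Matrix.mul_assoc, ← hT x hx, ← Matrix.mul_assoc, hT' x hx, Matrix.mul_assoc]
  obtain ⟨c', hc'⟩ :=
    hW'.exists_eq_smul_one_of_commute hirr' (isHermitian_mul_conjTranspose_self T) fun x hx => by
      change T * Tᴴ * W' x = W' x * (T * Tᴴ)
      rw [Matrix.mul_assoc, hT' x hx, ← Matrix.mul_assoc, ← hT x hx, Matrix.mul_assoc]
  obtain ⟨i⟩ := ‹Nonempty I›
  have hci : (Tᴴ * T) i i = c := by simp [hc]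
  have hc0 : 0 ≤ c := by
    simpa [hci] using (posSemidef_conjTranspose_mul_self T).diag_nonneg (i := i)
  refine ⟨c, hc0, hc, hc'.trans ?_⟩
  by_cases hT0 : T = 0
  · have : (c : ℂ) = 0 := by simp [← hci, hT0]
    rw [this, ← hc', hT0]
    simp
  have hcc' : (c' : ℂ) • T = (c : ℂ) • T :=
    calc (c' : ℂ) • T = T * Tᴴ * T := by rw [hc', Matrix.smul_mul, Matrix.one_mul]
      _ = T * (Tᴴ * T) := Matrix.mul_assoc _ _ _
      _ = (c : ℂ) • T := by rw [hc, Matrix.mul_smul, Matrix.mul_one]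
  rw [smul_left_injective ℂ hT0 hcc']

theorem unitaryWeightEquiv_of_intertwines {W : ℝ → Matrix I I ℂ} {W' : ℝ → Matrix I' I' ℂ}
    {T : Matrix I' I ℂ} {c : ℝ} (hc : 0 < c) (hTT : Tᴴ * T = (c : ℂ) • 1)
    (hTT' : T * Tᴴ = (c : ℂ) • 1) (hT : ∀ x ∈ weightSupport a b, W' x * T = T * W x) :
    UnitaryWeightEquiv a b W W' := by
  set r : ℂ := (((Real.sqrt c)⁻¹ : ℝ) : ℂ)
  have hstar : star r = r := Complex.conj_ofReal _
  have hr : r * r * c = 1 := by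
    have hs : (Real.sqrt c)⁻¹ * (Real.sqrt c)⁻¹ * c = 1 := by
      rw [← mul_inv, Real.mul_self_sqrt hc.le, inv_mul_cancel₀ hc.ne']
    simp only [r]
    exact_mod_cast hs
  refine unitaryWeightEquiv_iff.mpr ⟨r • T, ?_, ?_, fun x hx => ?_⟩
  · rw [conjTranspose_smul, hstar, Matrix.smul_mul, Matrix.mul_smul, hTT', smul_smul, smul_smul,
      hr, one_smul]
  · rw [conjTranspose_smul, hstar, Matrix.smul_mul, Matrix.mul_smul, hTT, smul_smul, smul_smul,
      hr, one_smul]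
  · rw [Matrix.mul_smul, hT x hx, Matrix.smul_mul]

end Irreducible

/-- If two direct sums of irreducible matrix weights are unitarily equivalent,
then they have the same number of blocks and, up to a permutation, the blocks are unitarily
equivalent. -/
theorem stmt_8 (a b : EReal) (j j' : ℕ) (n : Fin j → ℕ) (n' : Fin j' → ℕ)
    (hn : ∀ i, 0 < n i) (hn' : ∀ k, 0 < n' k)
    (W₁ : (i : Fin j) → ℝ → Matrix (Fin (n i)) (Fin (n i)) ℂ)
    (W₂ : (k : Fin j') → ℝ → Matrix (Fin (n' k)) (Fin (n' k)) ℂ)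
    (hW₁ : ∀ i, IsMatrixWeight a b (W₁ i)) (hW₂ : ∀ k, IsMatrixWeight a b (W₂ k))
    (hirr₁ : ∀ i, ¬ Reduces a b (W₁ i)) (hirr₂ : ∀ k, ¬ Reduces a b (W₂ k))
    (hequiv : UnitaryWeightEquiv a b
        (fun x => Matrix.blockDiagonal' (fun i => W₁ i x))
        (fun x => Matrix.blockDiagonal' (fun k => W₂ k x))) :
    j = j' ∧ ∃ σ : Fin j ≃ Fin j', ∀ i, UnitaryWeightEquiv a b (W₁ i) (W₂ (σ i)) := by
  obtain ⟨U, hU, hU', hUW⟩ := unitaryWeightEquiv_iff.mp hequiv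
  have hT : ∀ k i, ∀ x ∈ weightSupport a b, W₂ k x * U.submatrix (Sigma.mk k) (Sigma.mk i) =
      U.submatrix (Sigma.mk k) (Sigma.mk i) * W₁ i x := fun k i x hx => by
    simpa only [submatrix_blockDiagonal'_mul, submatrix_mul_blockDiagonal'] using
      congrArg (·.submatrix (Sigma.mk k) (Sigma.mk i)) (hUW x hx)
  have : ∀ i, Nonempty (Fin (n i)) := fun i => Fin.pos_iff_nonempty.mp (hn i)
  have : ∀ k, Nonempty (Fin (n' k)) := fun k => Fin.pos_iff_nonempty.mp (hn' k)
  choose c hc0 hc hc' using fun k i => (hW₁ i).exists_conjTranspose_mul_self_eq_smul_one (hW₂ k)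
    (hirr₁ i) (hirr₂ k) (hT k i)
  have hcol : ∀ i, ∑ k, c k i = 1 := fun i => sum_eq_one_of_conjTranspose_mul_self_eq_one hU' hc i
  have hrow : ∀ k, ∑ i, c k i = 1 := fun k =>
    sum_eq_one_of_conjTranspose_mul_self_eq_one (U := Uᴴ) (by rwa [conjTranspose_conjTranspose])
      (fun i k => by rw [conjTranspose_submatrix, conjTranspose_conjTranspose]; exact hc' k i) k
  obtain rfl : j = j' := by simpa using Fintype.card_eq_of_sum_eq_one hcol hrow
  obtain ⟨σ, hσ⟩ := exists_perm_apply_ne_zero_of_mem_doublyStochastic (M := of fun i k => c k i)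
    (mem_doublyStochastic_iff_sum.mpr ⟨fun i k => hc0 k i, hcol, hrow⟩)
  exact ⟨rfl, σ, fun i => unitaryWeightEquiv_of_intertwines ((hc0 _ _).lt_of_ne' (hσ i))
    (hc _ i) (hc' _ i) (hT _ i)⟩
end

section
/- Let (a,b) be a finite interval and let w : (a,b) → ℂ be an integrable function such that x ↦ x^k w(x) is integrable for every k ∈ ℕ. If ∫_a^b x^k w(x) dx = 0 for all k ∈ ℕ, then w = 0 almost everywhere on (a,b). -/
/-!
Since polynomials are uniformly dense in `C([a,b])` (Weierstrass) and `w` is integrable, the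
vanishing of all moments forces `∫ g w = 0` for every continuous `g`, in particular for every
smooth compactly supported `g`; the fundamental lemma of the calculus of variations then gives
`w = 0` almost everywhere.
-/

open MeasureTheory Matrix
open scoped ComplexOrder

open Polynomial

section

variable {μ : Measure ℝ} {w : ℝ → ℂ}

theorem integral_eval_mul_eq_zero_of_moments
    (hint : ∀ k : ℕ, Integrable (fun x : ℝ => (x : ℂ) ^ k * w x) μ)
    (hmom : ∀ k : ℕ, ∫ x, (x : ℂ) ^ k * w x ∂μ = 0) (p : ℝ[X]) :
    ∫ x, ((p.eval x : ℝ) : ℂ) * w x ∂μ = 0 := by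
  have hsum : ∀ x : ℝ, ((p.eval x : ℝ) : ℂ) * w x =
      ∑ i ∈ Finset.range (p.natDegree + 1), (p.coeff i : ℂ) * ((x : ℂ) ^ i * w x) := by
    intro x
    simp only [eval_eq_sum_range, Complex.ofReal_sum, Complex.ofReal_mul,
      Complex.ofReal_pow, Finset.sum_mul, mul_assoc]
  simp_rw [hsum]
  rw [integral_finsetSum _ fun i _ => (hint i).const_mul _]
  exact Finset.sum_eq_zero fun i _ => by rw [integral_const_mul, hmom i, mul_zero]

variable {a b : ℝ}

theorem integrable_ofReal_mul_of_ae_mem_Icc (hμ : ∀ᵐ x ∂μ, x ∈ Set.Icc a b)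
    (hw : Integrable w μ) {g : ℝ → ℝ} (hg : Continuous g) :
    Integrable (fun x => (g x : ℂ) * w x) μ := by
  obtain ⟨C, hC⟩ := isCompact_Icc.exists_bound_of_continuousOn hg.continuousOn
  refine hw.bdd_mul (c := C) (Complex.continuous_ofReal.comp hg).aestronglyMeasurable ?_
  filter_upwards [hμ] with x hx
  simpa using hC x hx

theorem integral_ofReal_mul_eq_zero_of_polynomial (hμ : ∀ᵐ x ∂μ, x ∈ Set.Icc a b)
    (hw : Integrable w μ) (hpoly : ∀ p : ℝ[X], ∫ x, ((p.eval x : ℝ) : ℂ) * w x ∂μ = 0)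
    {g : ℝ → ℝ} (hg : Continuous g) : ∫ x, (g x : ℂ) * w x ∂μ = 0 := by
  set M := ∫ x, ‖w x‖ ∂μ
  have hM : 0 ≤ M := integral_nonneg fun x => norm_nonneg _
  refine norm_le_zero_iff.1 (le_of_forall_pos_le_add fun ε hε => ?_)
  set δ := ε / (M + 1)
  obtain ⟨p, hp⟩ := exists_polynomial_near_of_continuousOn a b g hg.continuousOn δ
    (div_pos hε (by linarith))
  have hsplit :
      ∫ x, (g x : ℂ) * w x ∂μ = ∫ x, ((g x - p.eval x : ℝ) : ℂ) * w x ∂μ := by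
    rw [← sub_zero (∫ x, (g x : ℂ) * w x ∂μ), ← hpoly p, ← integral_sub
      (integrable_ofReal_mul_of_ae_mem_Icc hμ hw hg)
      (integrable_ofReal_mul_of_ae_mem_Icc hμ hw p.continuous)]
    simp only [Complex.ofReal_sub, sub_mul]
  have hpointwise : ∀ᵐ x ∂μ, ‖((g x - p.eval x : ℝ) : ℂ) * w x‖ ≤ δ * ‖w x‖ := by
    filter_upwards [hμ] with x hx
    rw [norm_mul, Complex.norm_real, Real.norm_eq_abs, abs_sub_comm]
    exact mul_le_mul_of_nonneg_right (hp x hx).le (norm_nonneg _)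
  rw [hsplit]
  calc ‖∫ x, ((g x - p.eval x : ℝ) : ℂ) * w x ∂μ‖
      ≤ ∫ x, δ * ‖w x‖ ∂μ := norm_integral_le_of_norm_le (hw.norm.const_mul δ) hpointwise
    _ = δ * M := integral_const_mul δ _
    _ ≤ 0 + ε := by
      rw [zero_add, div_mul_eq_mul_div, div_le_iff₀ (by linarith)]
      nlinarith

end

/-- If `w` is integrable on the finite interval `(a,b)`, with `x^k w(x)`
integrable for all `k`, and all moments `∫ x^k w(x) dx` vanish, then `w = 0` almost
everywhere on `(a,b)`. -/
theorem stmt_11 (a b : ℝ) (w : ℝ → ℂ)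
    (hint : ∀ k : ℕ, IntegrableOn (fun x : ℝ => (x : ℂ) ^ k * w x) (Set.Ioo a b))
    (hmom : ∀ k : ℕ, ∫ x in Set.Ioo a b, (x : ℂ) ^ k * w x = 0) :
    ∀ᵐ x : ℝ ∂(volume.restrict (Set.Ioo a b)), w x = 0 := by
  have hμ : ∀ᵐ x ∂(volume.restrict (Set.Ioo a b)), x ∈ Set.Icc a b :=
    ae_restrict_of_forall_mem measurableSet_Ioo fun _ hx => Set.Ioo_subset_Icc_self hx
  have hw : IntegrableOn w (Set.Ioo a b) := by simpa using hint 0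
  refine ae_eq_zero_of_integral_contDiff_smul_eq_zero hw.locallyIntegrable fun g hg _ => ?_
  simp_rw [Complex.real_smul]
  exact integral_ofReal_mul_eq_zero_of_polynomial hμ hw
    (integral_eval_mul_eq_zero_of_moments hint hmom) hg.continuous
end

section
/- Let {Q_n} be a sequence of orthogonal polynomials with respect to a matrix weight W and with respect to a matrix weight V, both of size N. If the zeroth moments agree, ∫ W(x) dx = ∫ V(x) dx, then all moments agree: ∫ x^n W(x) dx = ∫ x^n V(x) dx for every n ∈ ℕ. If moreover both weights have compact support, then W = V almost everywhere. -/
open MeasureTheory Matrix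
open scoped ComplexOrder

/-! Orthogonality of `Q n` against the constant `Q 0` says that `∫ Q n W = 0` for `n ≥ 1`; expanding
`Q n` in powers of `x` this is a triangular linear system `∑_{k ≤ n} (Q n)ₖ Mₖ = 0` in the moments
`Mₖ`, with invertible diagonal coefficients. Hence the moments are determined by the zeroth one.
For compactly supported weights, the entries of `W - V` then integrate every polynomial to zero,
hence (Weierstrass) every continuous function, hence every test function, so they vanish a.e. -/

open Set Polynomial Finset

theorem eq_of_triangular_sum_eq_zero {R : Type*} [Ring R] {c : ℕ → ℕ → R}
    (hc : ∀ n, IsUnit (c n n)) {m m' : ℕ → R} (h0 : m 0 = m' 0)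
    (hm : ∀ n ≠ 0, ∑ k ∈ range (n + 1), c n k * m k = 0)
    (hm' : ∀ n ≠ 0, ∑ k ∈ range (n + 1), c n k * m' k = 0) :
    m = m' := by
  funext n
  induction n using Nat.strong_induction_on with
  | _ n ih =>
    rcases n with _ | n
    · exact h0
    have hlower : ∑ k ∈ range (n + 1), c (n + 1) k * m k
        = ∑ k ∈ range (n + 1), c (n + 1) k * m' k :=
      sum_congr rfl fun k hk => by rw [ih k (by simp at hk; omega)]
    have h := (hm (n + 1) n.succ_ne_zero).trans (hm' (n + 1) n.succ_ne_zero).symm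
    rw [sum_range_succ _ (n + 1), sum_range_succ _ (n + 1), hlower] at h
    exact (hc (n + 1)).mul_left_cancel (add_left_cancel h)

section MatrixMoments

variable {I : Type} {S : Set ℝ}

noncomputable def matMoment (S : Set ℝ) (W : ℝ → Matrix I I ℂ) (n : ℕ) : Matrix I I ℂ :=
  matIntegral S fun x => (x : ℂ) ^ n • W x

lemma matIntegral_finsetSum {ι : Type*} (s : Finset ι) {F : ι → ℝ → Matrix I I ℂ}
    (hF : ∀ k ∈ s, ∀ i j, IntegrableOn (fun x => F k x i j) S) :
    matIntegral S (fun x => ∑ k ∈ s, F k x) = ∑ k ∈ s, matIntegral S (F k) := by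
  ext i j
  simp only [matIntegral, of_apply, Matrix.sum_apply]
  exact integral_finsetSum s fun k hk => hF k hk i j

lemma integrableOn_const_mul_apply [Fintype I] (A : Matrix I I ℂ) {F : ℝ → Matrix I I ℂ}
    (hF : ∀ i j, IntegrableOn (fun x => F x i j) S) (i j : I) :
    IntegrableOn (fun x => (A * F x) i j) S := by
  simp only [mul_apply]
  exact integrable_finsetSum _ fun l _ => (hF l j).const_mul _

lemma matIntegral_const_mul [Fintype I] (A : Matrix I I ℂ) {F : ℝ → Matrix I I ℂ}
    (hF : ∀ i j, IntegrableOn (fun x => F x i j) S) :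
    matIntegral S (fun x => A * F x) = A * matIntegral S F := by
  ext i j
  simp only [matIntegral, of_apply, mul_apply]
  rw [integral_finsetSum _ fun l _ => (hF l j).const_mul _]
  simp_rw [integral_const_mul]

lemma matIntegral_mul_const [Fintype I] {F : ℝ → Matrix I I ℂ}
    (hF : ∀ i j, IntegrableOn (fun x => F x i j) S) (A : Matrix I I ℂ) :
    matIntegral S (fun x => F x * A) = matIntegral S F * A := by
  ext i j
  simp only [matIntegral, of_apply, mul_apply]
  rw [integral_finsetSum _ fun l _ => (hF i l).mul_const _]
  simp_rw [integral_mul_const]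

lemma polyEval_mul_eq_sum [Fintype I] [DecidableEq I] (p : (Matrix I I ℂ)[X]) (A : Matrix I I ℂ)
    (x : ℝ) :
    polyEval p x * A = ∑ k ∈ range (p.natDegree + 1), p.coeff k * ((x : ℂ) ^ k • A) := by
  simp only [polyEval, eval_eq_sum_range, sum_mul, _root_.smul_pow, one_pow, mul_smul_comm,
    mul_one, smul_mul_assoc]

lemma polyEval_of_natDegree_eq_zero [Fintype I] [DecidableEq I] {p : (Matrix I I ℂ)[X]}
    (hp : p.natDegree = 0) (x : ℝ) :
    polyEval p x = p.coeff 0 := by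
  rw [polyEval, eq_C_of_natDegree_eq_zero hp, eval_C, coeff_C_zero]

lemma integrableOn_polyEval_mul_apply [Fintype I] [DecidableEq I] {W : ℝ → Matrix I I ℂ}
    (hW : ∀ n : ℕ, ∀ i j, IntegrableOn (fun x : ℝ => (x : ℂ) ^ n * W x i j) S)
    (p : (Matrix I I ℂ)[X]) (i j : I) :
    IntegrableOn (fun x => (polyEval p x * W x) i j) S := by
  simp_rw [polyEval_mul_eq_sum, Matrix.sum_apply]
  exact integrable_finsetSum _ fun k _ => integrableOn_const_mul_apply _ (hW k) i j

lemma matIntegral_polyEval_mul [Fintype I] [DecidableEq I] {W : ℝ → Matrix I I ℂ}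
    (hW : ∀ n : ℕ, ∀ i j, IntegrableOn (fun x : ℝ => (x : ℂ) ^ n * W x i j) S)
    (p : (Matrix I I ℂ)[X]) :
    matIntegral S (fun x => polyEval p x * W x)
      = ∑ k ∈ range (p.natDegree + 1), p.coeff k * matMoment S W k := by
  simp_rw [polyEval_mul_eq_sum]
  have hterm : ∀ k : ℕ, ∀ i j, IntegrableOn (fun x : ℝ => ((x : ℂ) ^ k • W x) i j) S := hW
  rw [matIntegral_finsetSum _ fun k _ => integrableOn_const_mul_apply _ (hterm k)]
  exact sum_congr rfl fun k _ => matIntegral_const_mul _ (hterm k)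

lemma IsOPS.sum_coeff_mul_matMoment_eq_zero [Fintype I] [DecidableEq I] {a b : EReal}
    {W : ℝ → Matrix I I ℂ} {Q : ℕ → (Matrix I I ℂ)[X]} (hQ : IsOPS a b W Q)
    (hW : ∀ n : ℕ, ∀ i j, IntegrableOn (fun x : ℝ => (x : ℂ) ^ n * W x i j) (weightSupport a b))
    {n : ℕ} (hn : n ≠ 0) :
    ∑ k ∈ range (n + 1), (Q n).coeff k * matMoment (weightSupport a b) W k = 0 := by
  have horth := hQ.2 n 0 hn
  simp_rw [polyEval_of_natDegree_eq_zero (hQ.1 0).1] at horth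
  rw [matIntegral_mul_const (integrableOn_polyEval_mul_apply hW (Q n)),
    matIntegral_polyEval_mul hW, (hQ.1 n).1] at horth
  exact ((isUnit_conjTranspose _).2 (hQ.1 0).2).mul_left_injective
    (horth.trans (zero_mul _).symm)

theorem matMoment_eq_of_isOPS [Fintype I] [DecidableEq I] {a b c d : EReal}
    {W V : ℝ → Matrix I I ℂ}
    (hW : ∀ n : ℕ, ∀ i j, IntegrableOn (fun x : ℝ => (x : ℂ) ^ n * W x i j) (weightSupport a b))
    (hV : ∀ n : ℕ, ∀ i j, IntegrableOn (fun x : ℝ => (x : ℂ) ^ n * V x i j) (weightSupport c d))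
    {Q : ℕ → (Matrix I I ℂ)[X]} (hQW : IsOPS a b W Q) (hQV : IsOPS c d V Q)
    (h0 : matIntegral (weightSupport a b) W = matIntegral (weightSupport c d) V) :
    matMoment (weightSupport a b) W = matMoment (weightSupport c d) V :=
  eq_of_triangular_sum_eq_zero (fun n => (hQW.1 n).2) (by simpa [matMoment] using h0)
    (fun _ hn => hQW.sum_coeff_mul_matMoment_eq_zero hW hn)
    (fun _ hn => hQV.sum_coeff_mul_matMoment_eq_zero hV hn)

end MatrixMoments

section MomentUniqueness

variable {μ : Measure ℝ} {g : ℝ → ℂ} {a b : ℝ}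

lemma setIntegral_polynomial_mul_eq_zero (hg : IntegrableOn g (Icc a b) μ)
    (hmom : ∀ n : ℕ, ∫ x in Icc a b, (x : ℂ) ^ n * g x ∂μ = 0) (p : ℝ[X]) :
    ∫ x in Icc a b, ((p.eval x : ℝ) : ℂ) * g x ∂μ = 0 := by
  have hint : ∀ k : ℕ, IntegrableOn (fun x : ℝ => (x : ℂ) ^ k * g x) (Icc a b) μ := fun k =>
    hg.continuousOn_mul (by fun_prop) isCompact_Icc
  have hexpand : ∀ x : ℝ, ((p.eval x : ℝ) : ℂ) * g x
      = ∑ k ∈ range (p.natDegree + 1), (p.coeff k : ℂ) * ((x : ℂ) ^ k * g x) := by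
    simp [eval_eq_sum_range, sum_mul, mul_assoc]
  simp_rw [hexpand]
  rw [integral_finsetSum _ fun k _ => (hint k).const_mul _]
  simp [integral_const_mul, hmom]

lemma setIntegral_continuous_smul_eq_zero (hg : IntegrableOn g (Icc a b) μ)
    (hmom : ∀ n : ℕ, ∫ x in Icc a b, (x : ℂ) ^ n * g x ∂μ = 0) {φ : ℝ → ℝ}
    (hφ : ContinuousOn φ (Icc a b)) :
    ∫ x in Icc a b, φ x • g x ∂μ = 0 := by
  set C := ∫ x in Icc a b, ‖g x‖ ∂μ
  have hC : 0 ≤ C := setIntegral_nonneg measurableSet_Icc fun x _ => norm_nonneg _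
  refine norm_le_zero_iff.1 (le_of_forall_pos_le_add fun δ hδ => ?_)
  obtain ⟨p, hp⟩ := exists_polynomial_near_of_continuousOn a b φ hφ (δ / (C + 1)) (by positivity)
  have hdiff : ∫ x in Icc a b, φ x • g x ∂μ
      = ∫ x in Icc a b, ((φ x - p.eval x : ℝ) : ℂ) * g x ∂μ := by
    simp_rw [Complex.ofReal_sub, sub_mul, Complex.real_smul]
    rw [integral_sub (hg.continuousOn_mul (by fun_prop) isCompact_Icc)
      (hg.continuousOn_mul (by fun_prop) isCompact_Icc),
      setIntegral_polynomial_mul_eq_zero hg hmom, sub_zero]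
  have hbound : ∀ᵐ x ∂μ.restrict (Icc a b),
      ‖((φ x - p.eval x : ℝ) : ℂ) * g x‖ ≤ δ / (C + 1) * ‖g x‖ := by
    refine ae_restrict_of_forall_mem measurableSet_Icc fun x hx => ?_
    rw [norm_mul, Complex.norm_real, Real.norm_eq_abs, abs_sub_comm]
    exact mul_le_mul_of_nonneg_right (hp x hx).le (norm_nonneg _)
  calc ‖∫ x in Icc a b, φ x • g x ∂μ‖
      ≤ ∫ x in Icc a b, δ / (C + 1) * ‖g x‖ ∂μ :=
        hdiff ▸ norm_integral_le_of_norm_le (hg.norm.const_mul _) hbound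
    _ = δ / (C + 1) * C := integral_const_mul _ _
    _ ≤ 0 + δ := by
        rw [zero_add, div_mul_eq_mul_div, div_le_iff₀ (by positivity)]
        nlinarith

theorem ae_eq_zero_of_setIntegral_pow_mul_eq_zero (hg : IntegrableOn g (Icc a b) μ)
    (hmom : ∀ n : ℕ, ∫ x in Icc a b, (x : ℂ) ^ n * g x ∂μ = 0) :
    ∀ᵐ x ∂μ.restrict (Icc a b), g x = 0 :=
  ae_eq_zero_of_integral_contDiff_smul_eq_zero hg.locallyIntegrable fun _ hφ _ =>
    setIntegral_continuous_smul_eq_zero hg hmom hφ.continuous.continuousOn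

theorem indicator_ae_eq_of_setIntegral_pow_mul_eq {S T : Set ℝ} {f f' : ℝ → ℂ}
    (hS : MeasurableSet S) (hT : MeasurableSet T) (hSab : S ⊆ Icc a b) (hTab : T ⊆ Icc a b)
    (hf : IntegrableOn f S) (hf' : IntegrableOn f' T)
    (h : ∀ n : ℕ, ∫ x in S, (x : ℂ) ^ n * f x = ∫ x in T, (x : ℂ) ^ n * f' x) :
    S.indicator f =ᵐ[volume] T.indicator f' := by
  have hpow : ∀ {U : Set ℝ} {u : ℝ → ℂ}, MeasurableSet U → U ⊆ Icc a b →
      ∀ n : ℕ, ∫ x in Icc a b, (x : ℂ) ^ n * U.indicator u x = ∫ x in U, (x : ℂ) ^ n * u x := by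
    intro U u hU hUab n
    simp_rw [fun x => (indicator_mul_right U (fun x : ℝ => (x : ℂ) ^ n) u (i := x)).symm]
    rw [setIntegral_indicator hU, inter_eq_right.2 hUab]
  have hint : ∀ {U : Set ℝ} {u : ℝ → ℂ}, MeasurableSet U → IntegrableOn u U →
      IntegrableOn (U.indicator u) (Icc a b) := fun hU hu =>
    (hu.integrable_indicator hU).integrableOn
  have hzero : ∀ᵐ x ∂volume.restrict (Icc a b), S.indicator f x - T.indicator f' x = 0 := by
    refine ae_eq_zero_of_setIntegral_pow_mul_eq_zero ((hint hS hf).sub (hint hT hf')) fun n => ?_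
    simp_rw [mul_sub]
    rw [integral_sub, hpow hS hSab, hpow hT hTab, h, sub_self]
    · exact (hint hS hf).continuousOn_mul (by fun_prop) isCompact_Icc
    · exact (hint hT hf').continuousOn_mul (by fun_prop) isCompact_Icc
  filter_upwards [(ae_restrict_iff' measurableSet_Icc).1 hzero] with x hx
  by_cases hxab : x ∈ Icc a b
  · exact sub_eq_zero.1 (hx hxab)
  · rw [indicator_of_notMem (fun hxS => hxab (hSab hxS)),
      indicator_of_notMem (fun hxT => hxab (hTab hxT))]

end MomentUniqueness

theorem indicator_ae_eq_of_matMoment_eq {I : Type} [Finite I] {S T : Set ℝ} {a b : ℝ}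
    (hS : MeasurableSet S) (hT : MeasurableSet T) (hSab : S ⊆ Icc a b) (hTab : T ⊆ Icc a b)
    {W V : ℝ → Matrix I I ℂ} (hW : ∀ i j, IntegrableOn (fun x => W x i j) S)
    (hV : ∀ i j, IntegrableOn (fun x => V x i j) T) (h : matMoment S W = matMoment T V) :
    S.indicator W =ᵐ[volume] T.indicator V := by
  have hentry : ∀ i j, S.indicator (W · i j) =ᵐ[volume] T.indicator (V · i j) := fun i j =>
    indicator_ae_eq_of_setIntegral_pow_mul_eq hS hT hSab hTab (hW i j) (hV i j) fun n =>
      congr_fun₂ (congr_fun h n) i j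
  filter_upwards [ae_all_iff.2 fun i => ae_all_iff.2 (hentry i)] with x hx
  ext i j
  have hxij := hx i j
  by_cases hxS : x ∈ S <;> by_cases hxT : x ∈ T <;> simp_all

lemma weightSupport_coe (a b : ℝ) : weightSupport (a : EReal) (b : EReal) = Ioo a b := by
  ext x
  simp [weightSupport]

/-- If a sequence of matrix polynomials is orthogonal with respect to two
matrix weights `W` and `V` with equal zeroth moments, then all the moments of `W` and `V`
agree; if moreover both weights have compact support then `W = V` almost everywhere (extending
both by zero outside their supports). -/
theorem stmt_18 {N : ℕ} (a b c d : EReal)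
    (W V : ℝ → Matrix (Fin N) (Fin N) ℂ)
    (hW : IsMatrixWeight a b W) (hV : IsMatrixWeight c d V)
    (Q : ℕ → Polynomial (Matrix (Fin N) (Fin N) ℂ))
    (hQW : IsOPS a b W Q) (hQV : IsOPS c d V Q)
    (h0 : matIntegral (weightSupport a b) W = matIntegral (weightSupport c d) V) :
    (∀ n : ℕ,
      matIntegral (weightSupport a b) (fun x => ((x : ℂ) ^ n) • W x) =
        matIntegral (weightSupport c d) (fun x => ((x : ℂ) ^ n) • V x)) ∧
    ((∃ a' b' : ℝ, a = (a' : EReal) ∧ b = (b' : EReal)) →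
      (∃ c' d' : ℝ, c = (c' : EReal) ∧ d = (d' : EReal)) →
      ∀ᵐ x : ℝ ∂volume,
        (weightSupport a b).indicator W x = (weightSupport c d).indicator V x) := by
  have hmom := matMoment_eq_of_isOPS hW.2.2.2 hV.2.2.2 hQW hQV h0
  refine ⟨congr_fun hmom, ?_⟩
  rintro ⟨a', b', rfl, rfl⟩ ⟨c', d', rfl, rfl⟩
  have hW0 : ∀ i j, IntegrableOn (fun x => W x i j) (Ioo a' b') := fun i j => by
    simpa [weightSupport_coe] using hW.2.2.2 0 i j
  have hV0 : ∀ i j, IntegrableOn (fun x => V x i j) (Ioo c' d') := fun i j => by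
    simpa [weightSupport_coe] using hV.2.2.2 0 i j
  simp only [weightSupport_coe] at hmom ⊢
  exact indicator_ae_eq_of_matMoment_eq measurableSet_Ioo measurableSet_Ioo
    (Ioo_subset_Icc_self.trans (Icc_subset_Icc (min_le_left a' c') (le_max_left b' d')))
    (Ioo_subset_Icc_self.trans (Icc_subset_Icc (min_le_right a' c') (le_max_right b' d')))
    hW0 hV0 hmom
end
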